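/- arXiv:1703.02466 — 4 statements merged into one kernel-verified Lean document; each statement's English description precedes it below -/
import Mathlib

section
/- For every weak composition a of length n, the key polynomial equals the weight generating polynomial of semistandard key tableaux: Σ_{T∈SKT(a)} 𝔉_{des(T)}(x_1,…,x_n) = Σ_{T∈SSKT(a)} x_1^{wt(T)_1}⋯x_n^{wt(T)_n}. -/
open scoped Classical
open Finset

namespace NSMac

noncomputable section

/-- `NN n a` is the total size `a 1 + ⋯ + a n` of the weak composition `a` of length `n`. -/
def NN (n : ℕ) (a : ℕ → ℕ) : ℕ := ∑ i ∈ Finset.Icc 1 n, a i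

/-- The key diagram of a weak composition `a` of length `n`: cells `(i, j)` (row `i`,
column `j`, both 1-based, rows indexed bottom to top) with `1 ≤ i ≤ n`, `1 ≤ j ≤ a i`. -/
def keyDiagram (n : ℕ) (a : ℕ → ℕ) : Finset (ℕ × ℕ) :=
  (Finset.Icc 1 n ×ˢ Finset.Icc 1 (NN n a)).filter (fun c => c.2 ≤ a c.1)

/-- A standard filling: a bijection from the diagram onto `{1, …, N}`. -/
def IsStandardFilling (n : ℕ) (a : ℕ → ℕ) (T : ℕ × ℕ → ℕ) : Prop :=
  Set.BijOn T (keyDiagram n a : Set (ℕ × ℕ)) (Set.Icc 1 (NN n a))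

/-- Key tableau: positive entries, distinct within each column, rows weakly decreasing
left to right, and the key condition on column pairs. -/
def IsKeyTableau (n : ℕ) (a : ℕ → ℕ) (T : ℕ × ℕ → ℕ) : Prop :=
  (∀ c ∈ keyDiagram n a, 1 ≤ T c) ∧
  (∀ c ∈ keyDiagram n a, ∀ d ∈ keyDiagram n a, c.2 = d.2 → c ≠ d → T c ≠ T d) ∧
  (∀ r c : ℕ, (r, c) ∈ keyDiagram n a → (r, c + 1) ∈ keyDiagram n a →
    T (r, c + 1) ≤ T (r, c)) ∧
  (∀ r r' c : ℕ, (r, c) ∈ keyDiagram n a → (r', c) ∈ keyDiagram n a → r' < r →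
    T (r, c) < T (r', c) →
    (r', c + 1) ∈ keyDiagram n a ∧ T (r, c) < T (r', c + 1))

/-- Every entry is at most its row index. -/
def RowBounded (n : ℕ) (a : ℕ → ℕ) (T : ℕ × ℕ → ℕ) : Prop :=
  ∀ c ∈ keyDiagram n a, T c ≤ c.1

/-- The finset of fillings of the key diagram with entries in `{1, …, B}`, encoded as
finitely supported functions vanishing off the diagram. -/
def Fillings (n : ℕ) (a : ℕ → ℕ) (B : ℕ) : Finset ((ℕ × ℕ) →₀ ℕ) :=
  (keyDiagram n a).finsupp (fun _ => Finset.Icc 1 B)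

/-- Standard key tableaux `SKT(a)`. -/
def SKTset (n : ℕ) (a : ℕ → ℕ) : Finset ((ℕ × ℕ) →₀ ℕ) :=
  (Fillings n a (NN n a)).filter fun T => IsStandardFilling n a ⇑T ∧ IsKeyTableau n a ⇑T

/-- Semistandard key tableaux `SSKT(a)`. -/
def SSKTset (n : ℕ) (a : ℕ → ℕ) : Finset ((ℕ × ℕ) →₀ ℕ) :=
  (Fillings n a n).filter fun T => IsKeyTableau n a ⇑T ∧ RowBounded n a ⇑T

/-- The leg of a cell of a key diagram. -/
def leg (a : ℕ → ℕ) (c : ℕ × ℕ) : ℕ := a c.1 + 1 - c.2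

/-- `maj`: the sum of legs of cells whose entry strictly exceeds the entry to its left. -/
def maj (n : ℕ) (a : ℕ → ℕ) (T : ℕ × ℕ → ℕ) : ℕ :=
  ∑ c ∈ (keyDiagram n a).filter (fun c => 2 ≤ c.2 ∧ T (c.1, c.2 - 1) < T c), leg a c

/-- Counterclockwise cyclic orientation of a triple of entries. -/
def cyc3 (u v w : ℕ) : Prop := (u < v ∧ v < w) ∨ (v < w ∧ w < u) ∨ (w < u ∧ u < v)

/-- A Type I co-inversion triple, encoded by the pair of cells `p.1 = (r, c)` and
`p.2 = (r', c)` with `r < r'`, `a r' < a r`; the third cell is `(r, c+1)`. -/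
def IsCoinvI (n : ℕ) (a : ℕ → ℕ) (T : ℕ × ℕ → ℕ) (p : (ℕ × ℕ) × (ℕ × ℕ)) : Prop :=
  p.1.2 = p.2.2 ∧ p.1.1 < p.2.1 ∧ a p.2.1 < a p.1.1 ∧
  (p.1.1, p.1.2 + 1) ∈ keyDiagram n a ∧
  cyc3 (T p.2) (T p.1) (T (p.1.1, p.1.2 + 1))

/-- A Type II co-inversion triple, encoded by the pair of cells `p.1 = (r, c)` and
`p.2 = (r'', c+1)` with `r'' < r`, `a r'' ≤ a r`; the third cell is `(r, c+1)`. -/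
def IsCoinvII (n : ℕ) (a : ℕ → ℕ) (T : ℕ × ℕ → ℕ) (p : (ℕ × ℕ) × (ℕ × ℕ)) : Prop :=
  p.2.2 = p.1.2 + 1 ∧ p.2.1 < p.1.1 ∧ a p.2.1 ≤ a p.1.1 ∧
  (p.1.1, p.1.2 + 1) ∈ keyDiagram n a ∧
  cyc3 (T p.1) (T (p.1.1, p.1.2 + 1)) (T p.2)

/-- `coinv`: the number of co-inversion triples. -/
def coinv (n : ℕ) (a : ℕ → ℕ) (T : ℕ × ℕ → ℕ) : ℕ :=
  (((keyDiagram n a) ×ˢ (keyDiagram n a)).filter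
    (fun p => IsCoinvI n a T p ∨ IsCoinvII n a T p)).card

/-- Two cells attack each other: same column, or adjacent columns with the left cell
strictly higher. -/
def Attacks (c d : ℕ × ℕ) : Prop :=
  (c.2 = d.2 ∧ c ≠ d) ∨ (d.2 = c.2 + 1 ∧ d.1 < c.1) ∨ (c.2 = d.2 + 1 ∧ c.1 < d.1)

/-- Non-attacking filling: attacking cells get distinct entries and first-column entries
are at most their row index. -/
def IsNonAttacking (n : ℕ) (a : ℕ → ℕ) (T : ℕ × ℕ → ℕ) : Prop :=
  (∀ c ∈ keyDiagram n a, ∀ d ∈ keyDiagram n a, Attacks c d → T c ≠ T d) ∧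
  (∀ r : ℕ, (r, 1) ∈ keyDiagram n a → T (r, 1) ≤ r)

/-- Semistandard key tabloids `SSKD(a)`. -/
def SSKDset (n : ℕ) (a : ℕ → ℕ) : Finset ((ℕ × ℕ) →₀ ℕ) :=
  (Fillings n a n).filter fun T => IsNonAttacking n a ⇑T ∧ coinv n a ⇑T = 0

/-- Standard key tabloids `SKD(a)`. -/
def SKDset (n : ℕ) (a : ℕ → ℕ) : Finset ((ℕ × ℕ) →₀ ℕ) :=
  (Fillings n a (NN n a)).filter fun T => IsStandardFilling n a ⇑T ∧ coinv n a ⇑T = 0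

/-- The weight of a filling, as a finitely supported exponent vector. -/
def wtF (n : ℕ) (a : ℕ → ℕ) (T : ℕ × ℕ → ℕ) : ℕ →₀ ℕ :=
  ∑ c ∈ keyDiagram n a, Finsupp.single (T c) 1

/-- The row of the cell containing entry `i` (of a standard filling). -/
def rowOf (n : ℕ) (a : ℕ → ℕ) (T : ℕ × ℕ → ℕ) (i : ℕ) : ℕ :=
  ((keyDiagram n a).filter (fun c => T c = i)).sup (fun c => c.1)

/-- The column of the cell containing entry `i` (of a standard filling). -/
def colOf (n : ℕ) (a : ℕ → ℕ) (T : ℕ × ℕ → ℕ) (i : ℕ) : ℕ :=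
  ((keyDiagram n a).filter (fun c => T c = i)).sup (fun c => c.2)

/-- `tvalAux n a T m` is the `t`-value of the block (for the weak descent composition)
containing the entry `N - m`, computed by downward recursion from entry `N`. -/
def tvalAux (n : ℕ) (a : ℕ → ℕ) (T : ℕ × ℕ → ℕ) : ℕ → ℤ
  | 0 => if colOf n a T (NN n a) = 1 then (rowOf n a T (NN n a) : ℤ) else (n : ℤ)
  | m + 1 =>
    let i := NN n a - (m + 1)
    let prev := tvalAux n a T m
    if colOf n a T i ≤ colOf n a T (i + 1) then
      if colOf n a T i = 1 then min (rowOf n a T i : ℤ) (prev - 1) else prev - 1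
    else prev

/-- The `t`-value assigned to entry `i` of a standard filling. -/
def tval (n : ℕ) (a : ℕ → ℕ) (T : ℕ × ℕ → ℕ) (i : ℕ) : ℤ := tvalAux n a T (NN n a - i)

/-- The weak descent composition of a standard filling: `none` when the filling is
virtual, otherwise the weak composition of length `n` recording block sizes at rows. -/
def desOpt (n : ℕ) (a : ℕ → ℕ) (T : ℕ × ℕ → ℕ) : Option (ℕ → ℕ) :=
  if ∀ i ∈ Finset.Icc 1 (NN n a), 1 ≤ tval n a T i then
    some (fun r => ((Finset.Icc 1 (NN n a)).filter (fun i => tval n a T i = (r : ℤ))).card)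
  else none

/-- `flat n a`: the strong composition obtained from `(a 1, …, a n)` by deleting zeros. -/
def flat (n : ℕ) (a : ℕ → ℕ) : List ℕ :=
  ((List.range n).map (fun i => a (i + 1))).filter (fun x => x ≠ 0)

/-- `Refines β α`: `β` is obtained by splitting the parts of `α` into consecutive
(nonempty) chunks. -/
def Refines (β α : List ℕ) : Prop :=
  ∃ L : List (List ℕ), L.flatten = β ∧ L.map List.sum = α ∧ [] ∉ L

/-- `Dominates n b a`: `b ≥ a` in prefix-sum order, i.e. `b₁ + ⋯ + b_k ≥ a₁ + ⋯ + a_k`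
for all `k = 1, …, n`. -/
def Dominates (n : ℕ) (b a : ℕ → ℕ) : Prop :=
  ∀ k, 1 ≤ k → k ≤ n → ∑ i ∈ Finset.Icc 1 k, a i ≤ ∑ i ∈ Finset.Icc 1 k, b i

/-- The fundamental slide polynomial `𝔉_a(x₁, …, x_n)`, with coefficients in `ℤ[q]`. -/
def Slide (n : ℕ) (a : ℕ → ℕ) : MvPolynomial ℕ (Polynomial ℤ) :=
  ∑ b ∈ ((Finset.Icc 1 n).finsuppAntidiag (NN n a)).filter
      (fun b : ℕ →₀ ℕ => Dominates n ⇑b a ∧ Refines (flat n ⇑b) (flat n a)),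
    MvPolynomial.monomial b 1

/-- `𝔉` extended by `𝔉_∅ = 0`. -/
def SlideOpt (n : ℕ) : Option (ℕ → ℕ) → MvPolynomial ℕ (Polynomial ℤ)
  | none => 0
  | some b => Slide n b

/-- The key polynomial (type A Demazure character) `κ_a = Σ_{T ∈ SKT(a)} 𝔉_{des T}`. -/
def kappa (n : ℕ) (a : ℕ → ℕ) : MvPolynomial ℕ (Polynomial ℤ) :=
  ∑ T ∈ SKTset n a, SlideOpt n (desOpt n a ⇑T)

/-- The specialized nonsymmetric Macdonald polynomial
`E_a(X; q, 0) = Σ_{T ∈ SSKD(a)} q^{maj T} x^{wt T}` in `ℤ[q][x]`. -/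
def Epoly (n : ℕ) (a : ℕ → ℕ) : MvPolynomial ℕ (Polynomial ℤ) :=
  ∑ T ∈ SSKDset n a, MvPolynomial.monomial (wtF n a ⇑T) (Polynomial.X ^ maj n a ⇑T)

/-- Standardization: the new label of cell `c` is the number of cells `d` whose entry is
smaller, or equal with `d` weakly to the right (so equal entries are relabeled right to
left, processing entry values in increasing order). -/
def stdize (n : ℕ) (a : ℕ → ℕ) (T : ℕ × ℕ → ℕ) : ℕ × ℕ → ℕ := fun c =>
  ((keyDiagram n a).filter (fun d => T d < T c ∨ (T d = T c ∧ c.2 ≤ d.2))).card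

/-- Standardization, packaged as a finitely supported filling. -/
def stdF (n : ℕ) (a : ℕ → ℕ) (T : ℕ × ℕ → ℕ) : (ℕ × ℕ) →₀ ℕ :=
  ∑ c ∈ keyDiagram n a, Finsupp.single c (stdize n a T c)

/-- Column reading order: columns left to right, each column bottom to top. -/
def colLt (c d : ℕ × ℕ) : Prop := c.2 < d.2 ∨ (c.2 = d.2 ∧ c.1 < d.1)

/-- The cell of a standard filling containing entry `i`. -/
def cellOf (n : ℕ) (a : ℕ → ℕ) (T : ℕ × ℕ → ℕ) (i : ℕ) : ℕ × ℕ :=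
  (rowOf n a T i, colOf n a T i)

/-- Exchange the values `u` and `v`. -/
def swapVals (u v : ℕ) : ℕ → ℕ := fun m => if m = u then v else if m = v then u else m

/-- The cyclic relabeling `i-1 ↦ i ↦ i+1 ↦ i-1` of values. -/
def rho1 (i : ℕ) : ℕ → ℕ := fun m =>
  if m = i - 1 then i else if m = i then i + 1 else if m = i + 1 then i - 1 else m

/-- The cyclic relabeling `i-1 ↦ i+1 ↦ i ↦ i-1` of values. -/
def rho2 (i : ℕ) : ℕ → ℕ := fun m =>
  if m = i - 1 then i + 1 else if m = i then i - 1 else if m = i + 1 then i else m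

/-- The weak dual equivalence involution `ψ_i` on standard fillings. Letting `b, c, d` be
the cells of `i-1, i, i+1` in column reading order: `ψ_i(T) = T` if `c` contains `i`;
else `𝔟_i(T)` if `b, d` are attacking or row-adjacent (the nontrivial cycling of
`i-1, i, i+1` for which `c` does not receive `i`); else exchange `i-1, i` if `c`
contains `i+1`, and exchange `i, i+1` if `c` contains `i-1`. -/
def psi (n : ℕ) (a : ℕ → ℕ) (i : ℕ) (T : ℕ × ℕ → ℕ) : ℕ × ℕ → ℕ :=
  let x := cellOf n a T (i - 1)
  let y := cellOf n a T i
  let z := cellOf n a T (i + 1)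
  if (colLt x y ∧ colLt y z) ∨ (colLt z y ∧ colLt y x) then T
  else
    let xIsMid : Prop := (colLt y x ∧ colLt x z) ∨ (colLt z x ∧ colLt x y)
    let other : ℕ × ℕ := if xIsMid then z else x
    if Attacks y other ∨ (y.1 = other.1 ∧ (y.2 = other.2 + 1 ∨ other.2 = y.2 + 1)) then
      if xIsMid then rho2 i ∘ T else rho1 i ∘ T
    else if xIsMid then swapVals i (i + 1) ∘ T
    else swapVals (i - 1) i ∘ T

/-- `ψ`-relatedness on standard key tabloids: some `ψ_i` with `1 < i < N` maps one to
the other. -/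
def psiRel (n : ℕ) (a : ℕ → ℕ) (S T : (ℕ × ℕ) →₀ ℕ) : Prop :=
  S ∈ SKDset n a ∧ T ∈ SKDset n a ∧
    ∃ i, 1 < i ∧ i < NN n a ∧ psi n a i ⇑S = ⇑T

/-- `μ` (given by parts `μ 1 ≥ ⋯ ≥ μ ℓ > 0`) is a partition with `ℓ` parts. -/
def IsPartition (ℓ : ℕ) (μ : ℕ → ℕ) : Prop :=
  (∀ i, 1 ≤ i → i ≤ ℓ → 1 ≤ μ i) ∧ (∀ i j, 1 ≤ i → i ≤ j → j ≤ ℓ → μ j ≤ μ i)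

/-- The leg of a cell of a Young diagram: the number of cells weakly above it in its
column. -/
def legY (ℓ : ℕ) (μ : ℕ → ℕ) (c : ℕ × ℕ) : ℕ :=
  ((Finset.Icc c.1 ℓ).filter (fun i => c.2 ≤ μ i)).card

/-- `comaj` of a filling of a Young diagram. -/
def comajY (ℓ : ℕ) (μ : ℕ → ℕ) (T : ℕ × ℕ → ℕ) : ℕ :=
  ∑ c ∈ (keyDiagram ℓ μ).filter (fun c => 2 ≤ c.1 ∧ T c ≤ T (c.1 - 1, c.2)), legY ℓ μ c

/-- An inversion triple of a Young diagram, encoded by the pair of cells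
`p.1 = (r, c)`, `p.2 = (r, c')` with `c < c'`; for `r > 1` the third cell is `(r-1, c)`. -/
def IsInvPair (ℓ : ℕ) (μ : ℕ → ℕ) (T : ℕ × ℕ → ℕ) (p : (ℕ × ℕ) × (ℕ × ℕ)) : Prop :=
  p.1.1 = p.2.1 ∧ p.1.2 < p.2.2 ∧
  (if p.1.1 = 1 then T p.2 < T p.1
   else cyc3 (T p.2) (T p.1) (T (p.1.1 - 1, p.1.2)))

/-- `inv` of a filling of a Young diagram. -/
def invY (ℓ : ℕ) (μ : ℕ → ℕ) (T : ℕ × ℕ → ℕ) : ℕ :=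
  (((keyDiagram ℓ μ) ×ˢ (keyDiagram ℓ μ)).filter (fun p => IsInvPair ℓ μ T p)).card

/-- Standard Young tableau: standard filling with rows increasing left to right and
columns increasing bottom to top. -/
def IsSYT (ℓ : ℕ) (μ : ℕ → ℕ) (T : ℕ × ℕ → ℕ) : Prop :=
  IsStandardFilling ℓ μ T ∧
  (∀ r c : ℕ, (r, c) ∈ keyDiagram ℓ μ → (r, c + 1) ∈ keyDiagram ℓ μ →
    T (r, c) < T (r, c + 1)) ∧
  (∀ r c : ℕ, (r, c) ∈ keyDiagram ℓ μ → (r + 1, c) ∈ keyDiagram ℓ μ →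
    T (r, c) < T (r + 1, c))

/-- Standard Young tabloids `SYD(μ)`. -/
def SYDset (ℓ : ℕ) (μ : ℕ → ℕ) : Finset ((ℕ × ℕ) →₀ ℕ) :=
  (Fillings ℓ μ (NN ℓ μ)).filter fun T => IsStandardFilling ℓ μ ⇑T ∧ invY ℓ μ ⇑T = 0

/-- The length of column `j` of the key diagram of `a`. -/
def lam (n : ℕ) (a : ℕ → ℕ) (j : ℕ) : ℕ :=
  ((Finset.Icc 1 n).filter (fun i => j ≤ a i)).card

/-- The weak composition `0^m × a`. -/
def shiftComp (m : ℕ) (a : ℕ → ℕ) : ℕ → ℕ := fun i => if i ≤ m then 0 else a (i - m)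

/-- The shift of a filling: move row `i` to row `i + m`. -/
def shiftF (n : ℕ) (a : ℕ → ℕ) (m : ℕ) (T : ℕ × ℕ → ℕ) : (ℕ × ℕ) →₀ ℕ :=
  ∑ c ∈ keyDiagram n a, Finsupp.single (c.1 + m, c.2) (T c)

end

end NSMac

/-!
Standardization `T ↦ (std T, wt T)` and destandardization `(S, b) ↦ μ_b ∘ S`, where `μ_b i` is
the least `m` with `i ≤ b₁ + ⋯ + b_m`, are inverse bijections between `SSKT(a)` and the pairs
`(S, b)` with `S ∈ SKT(a)` and `x^b` a monomial of `𝔉_{des S}`.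

Standardizing numbers equal entries from right to left, so it keeps the key conditions, and
reading the entries of `T` in the order of the labels of `std T` is weakly increasing, strictly
across every break between the blocks of `des`. The `t`-values are the largest labelling with
this property that is bounded by `n` and, in the first column, by the row; as `T` is row
bounded, its entries lie below the `t`-values, which gives `wt T ≥ des (std T)`, and the
partial sums of `des` are counts of labels up to a block break, where the entry of `T` jumps,
hence partial sums of `wt T`: the weight refines `des`. Conversely, refinement makes `μ_b` jump
at every block break and dominance bounds it by the `t`-values, so `μ_b ∘ S` is again a
semistandard key tableau, whose standardization is `S`.
-/

namespace NSMac

open Finset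

section Diagram

variable {n : ℕ} {a : ℕ → ℕ}

lemma le_NN {i : ℕ} (h1 : 1 ≤ i) (h2 : i ≤ n) : a i ≤ NN n a :=
  single_le_sum (fun _ _ => Nat.zero_le _) (mem_Icc.mpr ⟨h1, h2⟩)

lemma NN_mono (a : ℕ → ℕ) {k k' : ℕ} (h : k ≤ k') : NN k a ≤ NN k' a :=
  sum_le_sum_of_subset (Icc_subset_Icc_right h)

lemma mem_keyDiagram {c : ℕ × ℕ} :
    c ∈ keyDiagram n a ↔ 1 ≤ c.1 ∧ c.1 ≤ n ∧ 1 ≤ c.2 ∧ c.2 ≤ a c.1 := by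
  simp only [keyDiagram, mem_filter, mem_product, mem_Icc]
  constructor
  · rintro ⟨⟨⟨h1, h2⟩, h3, -⟩, h4⟩
    exact ⟨h1, h2, h3, h4⟩
  · rintro ⟨h1, h2, h3, h4⟩
    exact ⟨⟨⟨h1, h2⟩, h3, h4.trans (le_NN h1 h2)⟩, h4⟩

lemma card_keyDiagram : #(keyDiagram n a) = NN n a := by
  rw [card_eq_sum_card_fiberwise (f := Prod.fst) (t := Icc 1 n)
    fun c hc => by simp [(mem_keyDiagram.mp hc).1, (mem_keyDiagram.mp hc).2.1]]
  refine sum_congr rfl fun i hi => ?_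
  have hrow : {c ∈ keyDiagram n a | c.1 = i} = {i} ×ˢ Icc 1 (a i) := by
    ext ⟨r, c⟩
    simp only [mem_filter, mem_keyDiagram, mem_product, mem_singleton, mem_Icc] at hi ⊢
    constructor
    · rintro ⟨⟨-, -, h3, h4⟩, rfl⟩
      exact ⟨rfl, h3, h4⟩
    · rintro ⟨rfl, h3, h4⟩
      exact ⟨⟨hi.1, hi.2, h3, h4⟩, rfl⟩
  simp [hrow]

end Diagram

namespace IsStandardFilling

variable {n : ℕ} {a : ℕ → ℕ} {S : ℕ × ℕ → ℕ}

lemma mem_Icc (hS : IsStandardFilling n a S) {c : ℕ × ℕ} (hc : c ∈ keyDiagram n a) :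
    S c ∈ Set.Icc 1 (NN n a) :=
  hS.mapsTo hc

lemma eq_of_apply_eq (hS : IsStandardFilling n a S) {c d : ℕ × ℕ}
    (hc : c ∈ keyDiagram n a) (hd : d ∈ keyDiagram n a) (h : S c = S d) : c = d :=
  hS.injOn hc hd h

lemma cellOf_apply (hS : IsStandardFilling n a S) {c : ℕ × ℕ} (hc : c ∈ keyDiagram n a) :
    cellOf n a S (S c) = c := by
  have hfiber : {d ∈ keyDiagram n a | S d = S c} = {c} := by
    ext d
    simp only [Finset.mem_filter, mem_singleton]
    exact ⟨fun ⟨hd, h⟩ => hS.eq_of_apply_eq hd hc h, by rintro rfl; exact ⟨hc, rfl⟩⟩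
  simp [cellOf, rowOf, colOf, hfiber]

lemma rowOf_apply (hS : IsStandardFilling n a S) {c : ℕ × ℕ} (hc : c ∈ keyDiagram n a) :
    rowOf n a S (S c) = c.1 :=
  congrArg Prod.fst (hS.cellOf_apply hc)

lemma colOf_apply (hS : IsStandardFilling n a S) {c : ℕ × ℕ} (hc : c ∈ keyDiagram n a) :
    colOf n a S (S c) = c.2 :=
  congrArg Prod.snd (hS.cellOf_apply hc)

lemma cellOf_mem (hS : IsStandardFilling n a S) {i : ℕ} (h1 : 1 ≤ i) (h2 : i ≤ NN n a) :
    cellOf n a S i ∈ keyDiagram n a ∧ S (cellOf n a S i) = i := by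
  obtain ⟨c, hc, rfl⟩ := hS.surjOn (Set.mem_Icc.mpr ⟨h1, h2⟩)
  rw [hS.cellOf_apply hc]
  exact ⟨hc, rfl⟩

lemma rowOf_le (hS : IsStandardFilling n a S) {i : ℕ} (h1 : 1 ≤ i) (h2 : i ≤ NN n a) :
    rowOf n a S i ≤ n :=
  (mem_keyDiagram.mp (hS.cellOf_mem h1 h2).1).2.1

lemma one_le_colOf (hS : IsStandardFilling n a S) {i : ℕ} (h1 : 1 ≤ i) (h2 : i ≤ NN n a) :
    1 ≤ colOf n a S i :=
  (mem_keyDiagram.mp (hS.cellOf_mem h1 h2).1).2.2.1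

lemma card_filter_cellOf (hS : IsStandardFilling n a S) (p : ℕ × ℕ → Prop) [DecidablePred p] :
    #{i ∈ Icc 1 (NN n a) | p (cellOf n a S i)} = #{c ∈ keyDiagram n a | p c} := by
  refine card_nbij' (cellOf n a S) S (fun i hi => ?_) (fun c hc => ?_) (fun i hi => ?_)
    (fun c hc => ?_)
  · simp only [coe_filter, Set.mem_ofPred_eq, Finset.mem_Icc] at hi ⊢
    exact ⟨(hS.cellOf_mem hi.1.1 hi.1.2).1, hi.2⟩
  · simp only [coe_filter, Set.mem_ofPred_eq, Finset.mem_Icc] at hc ⊢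
    exact ⟨hS.mem_Icc hc.1, by rw [hS.cellOf_apply hc.1]; exact hc.2⟩
  · simp only [coe_filter, Set.mem_ofPred_eq, Finset.mem_Icc] at hi
    exact (hS.cellOf_mem hi.1.1 hi.1.2).2
  · simp only [coe_filter, Set.mem_ofPred_eq] at hc
    exact hS.cellOf_apply hc.1

lemma card_filter_apply (hS : IsStandardFilling n a S) (q : ℕ → Prop) [DecidablePred q] :
    #{c ∈ keyDiagram n a | q (S c)} = #{i ∈ Icc 1 (NN n a) | q i} := by
  rw [← hS.card_filter_cellOf fun c => q (S c)]
  refine congrArg card (filter_congr fun i hi => ?_)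
  rw [(hS.cellOf_mem (Finset.mem_Icc.mp hi).1 (Finset.mem_Icc.mp hi).2).2]

end IsStandardFilling

section Standardization

/-- The order in which standardization numbers the cells: by entry, and among equal entries
from right to left. -/
def StdLt (T : ℕ × ℕ → ℕ) (c d : ℕ × ℕ) : Prop :=
  T c < T d ∨ (T c = T d ∧ d.2 < c.2)

variable {n : ℕ} {a : ℕ → ℕ} {T : ℕ × ℕ → ℕ}

lemma StdLt.trans {c d e : ℕ × ℕ} (h1 : StdLt T c d) (h2 : StdLt T d e) : StdLt T c e := by
  unfold StdLt at *
  omega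

lemma StdLt.asymm {c d : ℕ × ℕ} (h : StdLt T c d) : ¬ StdLt T d c := by
  unfold StdLt at *
  omega

def ColDistinct (n : ℕ) (a : ℕ → ℕ) (T : ℕ × ℕ → ℕ) : Prop :=
  ∀ c ∈ keyDiagram n a, ∀ d ∈ keyDiagram n a, c.2 = d.2 → c ≠ d → T c ≠ T d

variable (hT : ColDistinct n a T)
include hT

lemma stdLt_trichotomous {c d : ℕ × ℕ} (hc : c ∈ keyDiagram n a) (hd : d ∈ keyDiagram n a)
    (hne : c ≠ d) : StdLt T c d ∨ StdLt T d c := by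
  unfold StdLt
  by_cases hcol : c.2 = d.2
  · have := hT c hc d hd hcol hne
    omega
  · omega

lemma stdize_eq_card {c : ℕ × ℕ} (hc : c ∈ keyDiagram n a) :
    stdize n a T c = #{d ∈ keyDiagram n a | d = c ∨ StdLt T d c} := by
  refine congrArg card (filter_congr fun d hd => ?_)
  unfold StdLt
  by_cases hdc : d = c
  · subst hdc
    simp
  · have := hT d hd c hc
    simp only [hdc, false_or]
    by_cases hcol : d.2 = c.2
    · have := this hcol hdc
      omega
    · omega

lemma stdize_lt_stdize {c d : ℕ × ℕ} (hc : c ∈ keyDiagram n a) (hd : d ∈ keyDiagram n a)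
    (h : StdLt T c d) : stdize n a T c < stdize n a T d := by
  rw [stdize_eq_card hT hc, stdize_eq_card hT hd]
  refine card_lt_card ⟨fun e he => ?_, fun hsub => ?_⟩
  · simp only [Finset.mem_filter] at he ⊢
    rcases he with ⟨he, rfl | he'⟩
    · exact ⟨he, Or.inr h⟩
    · exact ⟨he, Or.inr (he'.trans h)⟩
  · have := (Finset.mem_filter.mp (hsub (Finset.mem_filter.mpr ⟨hd, Or.inl rfl⟩))).2
    rcases this with rfl | h'
    · exact h.asymm h
    · exact h.asymm h'

lemma stdize_lt_stdize_iff {c d : ℕ × ℕ} (hc : c ∈ keyDiagram n a)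
    (hd : d ∈ keyDiagram n a) : stdize n a T c < stdize n a T d ↔ StdLt T c d := by
  refine ⟨fun h => ?_, stdize_lt_stdize hT hc hd⟩
  rcases eq_or_ne c d with rfl | hne
  · exact absurd h (lt_irrefl _)
  rcases stdLt_trichotomous hT hc hd hne with h' | h'
  · exact h'
  · exact absurd (stdize_lt_stdize hT hd hc h') (by omega)

lemma stdize_injOn : Set.InjOn (stdize n a T) (keyDiagram n a) := by
  intro c hc d hd h
  by_contra hne
  rcases stdLt_trichotomous hT hc hd hne with h' | h'
  · exact (stdize_lt_stdize hT hc hd h').ne h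
  · exact (stdize_lt_stdize hT hd hc h').ne h.symm

omit hT in
lemma stdize_mem_Icc {c : ℕ × ℕ} (hc : c ∈ keyDiagram n a) :
    stdize n a T c ∈ Set.Icc 1 (NN n a) := by
  refine ⟨card_pos.mpr ⟨c, Finset.mem_filter.mpr ⟨hc, Or.inr ⟨rfl, le_rfl⟩⟩⟩, ?_⟩
  rw [stdize, ← card_keyDiagram]
  exact card_filter_le _ _

omit hT in
lemma card_filter_lt_lt_stdize {c : ℕ × ℕ} (hc : c ∈ keyDiagram n a) :
    #{d ∈ keyDiagram n a | T d < T c} < stdize n a T c := by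
  refine card_lt_card ⟨fun d hd => ?_, fun hsub => ?_⟩
  · rw [Finset.mem_filter] at hd ⊢
    exact ⟨hd.1, Or.inl hd.2⟩
  · have := (Finset.mem_filter.mp (hsub (Finset.mem_filter.mpr ⟨hc, Or.inr ⟨rfl, le_rfl⟩⟩))).2
    exact lt_irrefl _ this

omit hT in
lemma stdize_le_card_filter_le (c : ℕ × ℕ) :
    stdize n a T c ≤ #{d ∈ keyDiagram n a | T d ≤ T c} :=
  card_le_card fun d hd => by
    rw [Finset.mem_filter] at hd ⊢
    exact ⟨hd.1, by omega⟩

omit hT in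
lemma stdize_congr {T' : ℕ × ℕ → ℕ} (h : Set.EqOn T T' (keyDiagram n a)) {c : ℕ × ℕ}
    (hc : c ∈ keyDiagram n a) : stdize n a T c = stdize n a T' c :=
  congrArg card (filter_congr fun d hd => by rw [h hd, h hc])

lemma stdize_bijOn :
    Set.BijOn (stdize n a T) (keyDiagram n a) (Set.Icc 1 (NN n a)) := by
  have hmaps : Set.MapsTo (stdize n a T) (keyDiagram n a) (Icc 1 (NN n a) : Finset ℕ) :=
    fun c hc => by simpa using stdize_mem_Icc hc
  have hsurj := surjOn_of_injOn_of_card_le _ hmaps (stdize_injOn hT)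
    (by simp [card_keyDiagram])
  rw [coe_Icc] at hmaps hsurj
  exact ⟨hmaps, stdize_injOn hT, hsurj⟩

end Standardization

section PartialSums

lemma sum_card_filter_eq_card_filter_le {γ : Type*} (s : Finset γ) (g : γ → ℕ)
    (hg : ∀ x ∈ s, 1 ≤ g x) (k : ℕ) :
    ∑ j ∈ Icc 1 k, #{x ∈ s | g x = j} = #{x ∈ s | g x ≤ k} := by
  rw [card_eq_sum_card_fiberwise (f := g) (t := Icc 1 k) fun x hx => by
    simp only [coe_filter, Set.mem_ofPred_eq] at hx
    exact mem_Icc.mpr ⟨hg x hx.1, hx.2⟩]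
  refine sum_congr rfl fun j hj => ?_
  rw [filter_filter]
  refine congrArg card (filter_congr fun x _ => ?_)
  have := (mem_Icc.mp hj).2
  constructor
  · rintro rfl; exact ⟨this, rfl⟩
  · exact fun h => h.2

lemma filter_le_eq_Icc_card {α : Type*} [LinearOrder α] {N : ℕ} {k : α} {f : ℕ → α}
    (hf : MonotoneOn f (Set.Icc 1 N)) :
    {i ∈ Icc 1 N | f i ≤ k} = Icc 1 #{i ∈ Icc 1 N | f i ≤ k} := by
  have hcard_le : #{i ∈ Icc 1 N | f i ≤ k} ≤ N :=
    (card_filter_le _ _).trans (by simp)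
  ext i
  simp only [Finset.mem_filter, Finset.mem_Icc]
  constructor
  · rintro ⟨⟨h1, h2⟩, hk⟩
    refine ⟨h1, ?_⟩
    have hsub : Icc 1 i ⊆ {i ∈ Icc 1 N | f i ≤ k} := fun j hj => by
      simp only [Finset.mem_filter, Finset.mem_Icc] at hj ⊢
      exact ⟨⟨hj.1, hj.2.trans h2⟩, (hf ⟨hj.1, hj.2.trans h2⟩ ⟨h1, h2⟩ hj.2).trans hk⟩
    simpa using card_le_card hsub
  · rintro ⟨h1, h2⟩
    refine ⟨⟨h1, h2.trans hcard_le⟩, ?_⟩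
    by_contra! hk
    have hsub : {i ∈ Icc 1 N | f i ≤ k} ⊆ Icc 1 (i - 1) := fun j hj => by
      simp only [Finset.mem_filter, Finset.mem_Icc] at hj ⊢
      refine ⟨hj.1.1, ?_⟩
      by_contra! hij
      exact hk.not_ge ((hf ⟨h1, h2.trans hcard_le⟩ hj.1 (by omega)).trans hj.2)
    have := card_le_card hsub
    simp only [Nat.card_Icc] at this
    omega

lemma card_filter_le_apply_eq {α : Type*} [LinearOrder α] {N i : ℕ} {f : ℕ → α}
    (hf : MonotoneOn f (Set.Icc 1 N)) (h1 : 1 ≤ i) (hi : i < N) (hlt : f i < f (i + 1)) :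
    #{j ∈ Icc 1 N | f j ≤ f i} = i := by
  have hs := filter_le_eq_Icc_card hf (k := f i)
  have hmem : i ∈ {j ∈ Icc 1 N | f j ≤ f i} := by simp [h1, hi.le]
  have hnot : i + 1 ∉ {j ∈ Icc 1 N | f j ≤ f i} := by simp [hlt]
  rw [hs, Finset.mem_Icc] at hmem hnot
  omega

lemma NN_zero (b : ℕ → ℕ) : NN 0 b = 0 := by
  simp [NN]

lemma NN_succ (b : ℕ → ℕ) (m : ℕ) : NN (m + 1) b = NN m b + b (m + 1) :=
  sum_Icc_succ_top (by omega) b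

lemma eq_of_NN_eq {n : ℕ} {f g : ℕ →₀ ℕ} (hf : f.support ⊆ Icc 1 n)
    (hg : g.support ⊆ Icc 1 n) (h : ∀ m ≤ n, NN m f = NN m g) : f = g := by
  ext m
  by_cases hm : m ∈ Icc 1 n
  · obtain ⟨h1, h2⟩ := mem_Icc.mp hm
    obtain ⟨k, rfl⟩ : ∃ k, m = k + 1 := ⟨m - 1, by omega⟩
    have := h (k + 1) h2
    rw [NN_succ, NN_succ, h k (by omega)] at this
    omega
  · rw [Finsupp.notMem_support_iff.mp (mt (@hf m) hm),
      Finsupp.notMem_support_iff.mp (mt (@hg m) hm)]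

/-- The entry that destandardization along the weight `b` gives to the cell labelled `i`. -/
noncomputable def muOf (b : ℕ → ℕ) (i : ℕ) : ℕ := sInf {m | i ≤ NN m b}

variable {b : ℕ → ℕ} {n i : ℕ}

lemma muOf_le_iff (hi : i ≤ NN n b) {m : ℕ} : muOf b i ≤ m ↔ i ≤ NN m b :=
  ⟨fun h => (Nat.sInf_mem (⟨n, hi⟩ : {m | i ≤ NN m b}.Nonempty)).trans (NN_mono b h),
    fun h => Nat.sInf_le h⟩

lemma muOf_le (hi : i ≤ NN n b) : muOf b i ≤ n :=
  (muOf_le_iff hi).mpr hi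

lemma one_le_muOf (hi : i ≤ NN n b) (h1 : 1 ≤ i) : 1 ≤ muOf b i := by
  by_contra! h
  have := (muOf_le_iff hi).mp (Nat.lt_one_iff.mp h).le
  rw [NN_zero] at this
  omega

lemma muOf_eq (hi : i ≤ NN n b) {m : ℕ} (hlo : NN (m - 1) b < i)
    (hhi : i ≤ NN m b) : muOf b i = m := by
  refine le_antisymm ((muOf_le_iff hi).mpr hhi) ?_
  by_contra! h
  have := (muOf_le_iff hi).mp (Nat.le_sub_one_of_lt h)
  omega

lemma muOf_monotoneOn : MonotoneOn (muOf b) (Set.Icc 1 (NN n b)) :=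
  fun _ hi _ hj hij => (muOf_le_iff hi.2).mpr (hij.trans ((muOf_le_iff hj.2).mp le_rfl))

lemma card_filter_muOf_le {m : ℕ} (hm : m ≤ n) :
    #{i ∈ Icc 1 (NN n b) | muOf b i ≤ m} = NN m b := by
  have : {i ∈ Icc 1 (NN n b) | muOf b i ≤ m} = Icc 1 (NN m b) := by
    ext i
    simp only [Finset.mem_filter, Finset.mem_Icc]
    constructor
    · rintro ⟨⟨h1, h2⟩, h⟩
      exact ⟨h1, (muOf_le_iff h2).mp h⟩
    · rintro ⟨h1, h2⟩
      have h2' := h2.trans (NN_mono b hm)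
      exact ⟨⟨h1, h2'⟩, (muOf_le_iff h2').mpr h2⟩
  simp [this]

end PartialSums

section Refinement

lemma sum_take_add (l : List ℕ) (m k : ℕ) :
    (l.take (m + k)).sum = (l.take m).sum + ((l.drop m).take k).sum := by
  rw [List.take_add, List.sum_append]

lemma sum_take_le_sum_take (l : List ℕ) {m m' : ℕ} (h : m ≤ m') :
    (l.take m).sum ≤ (l.take m').sum := by
  obtain ⟨k, rfl⟩ := Nat.exists_eq_add_of_le h
  rw [sum_take_add]
  omega

lemma Refines.exists_sum_take_eq {β α : List ℕ} (h : Refines β α) (j : ℕ) :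
    ∃ j', (α.take j).sum = (β.take j').sum := by
  obtain ⟨L, rfl, rfl, -⟩ := h
  refine ⟨(L.take j).flatten.length, ?_⟩
  have hsplit : L.flatten = (L.take j).flatten ++ (L.drop j).flatten := by
    rw [← List.flatten_append, List.take_append_drop]
  rw [← List.map_take, ← List.sum_flatten, hsplit, List.take_left]

lemma exists_sum_take_eq_sum_take_drop {α β : List ℕ} {x j₀ : ℕ} (hj₀ : x = (β.take j₀).sum)
    (h : ∀ j, ∃ j', ((x :: α).take j).sum = (β.take j').sum) (j : ℕ) :
    ∃ j', (α.take j).sum = ((β.drop j₀).take j').sum := by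
  obtain ⟨m, hm⟩ := h (j + 1)
  rw [List.take_succ_cons, List.sum_cons] at hm
  rcases le_or_gt m j₀ with hle | hlt
  · have := sum_take_le_sum_take β hle
    exact ⟨0, by rw [List.take_zero, List.sum_nil]; omega⟩
  · obtain ⟨k, rfl⟩ := Nat.exists_eq_add_of_lt hlt
    refine ⟨k + 1, ?_⟩
    rw [add_assoc, sum_take_add] at hm
    omega

lemma refines_of_forall_exists_sum_take_eq :
    ∀ (α β : List ℕ), (∀ x ∈ α, x ≠ 0) → (∀ x ∈ β, x ≠ 0) → α.sum = β.sum →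
      (∀ j, ∃ j', (α.take j).sum = (β.take j').sum) → Refines β α
  | [], β, _, hβ, hsum, _ => by
    have : β = [] := by
      by_contra hne
      obtain ⟨x, xs, rfl⟩ := List.exists_cons_of_ne_nil hne
      have := hβ x List.mem_cons_self
      simp only [List.sum_nil, List.sum_cons] at hsum
      omega
    exact ⟨[], by simp [this], rfl, by simp⟩
  | x :: α, β, hα, hβ, hsum, h => by
    obtain ⟨j₀, hj₀⟩ := h 1
    simp only [List.take_succ_cons, List.take_zero, List.sum_cons, List.sum_nil,
      add_zero] at hj₀
    have hsplit : β = β.take j₀ ++ β.drop j₀ := (List.take_append_drop j₀ β).symm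
    have hrestsum : α.sum = (β.drop j₀).sum := by
      have := congrArg List.sum hsplit
      rw [List.sum_append] at this
      simp only [List.sum_cons] at hsum
      omega
    obtain ⟨L, hL, hLsum, hLne⟩ := refines_of_forall_exists_sum_take_eq α (β.drop j₀)
      (fun y hy => hα y (List.mem_cons_of_mem _ hy))
      (fun y hy => hβ y (List.mem_of_mem_drop hy)) hrestsum
      (exists_sum_take_eq_sum_take_drop hj₀ h)
    refine ⟨β.take j₀ :: L, by rw [List.flatten_cons, hL, ← hsplit], by simp [hLsum, hj₀], ?_⟩
    intro hmem
    rcases List.mem_cons.mp hmem with h0 | hmem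
    · rw [← h0, List.sum_nil] at hj₀
      exact hα x List.mem_cons_self hj₀
    · exact hLne hmem

lemma sum_filter_ne_zero (l : List ℕ) : (l.filter (fun x => x ≠ 0)).sum = l.sum := by
  induction l with
  | nil => rfl
  | cons x xs ih => by_cases hx : x = 0 <;> simpa [List.filter_cons, hx] using ih

lemma exists_sum_take_filter_ne_zero (l : List ℕ) (k : ℕ) :
    ∃ j, (l.take k).sum = ((l.filter (fun x => x ≠ 0)).take j).sum := by
  induction l generalizing k with
  | nil => exact ⟨0, by simp⟩
  | cons x xs ih =>
    cases k with
    | zero => exact ⟨0, by simp⟩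
    | succ k =>
      obtain ⟨j, hj⟩ := ih k
      by_cases hx : x = 0
      · exact ⟨j, by simpa [List.filter_cons, hx] using hj⟩
      · exact ⟨j + 1, by simpa [List.filter_cons, hx] using hj⟩

lemma exists_sum_take_of_filter_ne_zero (l : List ℕ) (j : ℕ) :
    ∃ k ≤ l.length, ((l.filter (fun x => x ≠ 0)).take j).sum = (l.take k).sum := by
  induction l generalizing j with
  | nil => exact ⟨0, le_rfl, by simp⟩
  | cons x xs ih =>
    by_cases hx : x = 0
    · obtain ⟨k, hk, hkeq⟩ := ih j
      exact ⟨k + 1, by simpa using hk, by simpa [List.filter_cons, hx] using hkeq⟩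
    · cases j with
      | zero => exact ⟨0, by simp, by simp⟩
      | succ j =>
        obtain ⟨k, hk, hkeq⟩ := ih j
        exact ⟨k + 1, by simpa using hk, by simpa [List.filter_cons, hx] using hkeq⟩

lemma NN_eq_sum_take (f : ℕ → ℕ) {n k : ℕ} (h : k ≤ n) :
    NN k f = (((List.range n).map (fun i => f (i + 1))).take k).sum := by
  induction k with
  | zero => simp [NN_zero]
  | succ k ih =>
    rw [NN_succ, ih (by omega), ← List.map_take, ← List.map_take, List.take_range,
      List.take_range, min_eq_left h, min_eq_left (by omega : k ≤ n), List.range_succ]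
    simp

lemma exists_NN_eq_sum_take_flat (f : ℕ → ℕ) {n k : ℕ} (h : k ≤ n) :
    ∃ j, NN k f = ((flat n f).take j).sum := by
  rw [NN_eq_sum_take f h]
  exact exists_sum_take_filter_ne_zero _ k

lemma exists_sum_take_flat_eq_NN (f : ℕ → ℕ) (n j : ℕ) :
    ∃ k ≤ n, ((flat n f).take j).sum = NN k f := by
  obtain ⟨k, hk, hkeq⟩ := exists_sum_take_of_filter_ne_zero
    ((List.range n).map (fun i => f (i + 1))) j
  simp only [List.length_map, List.length_range] at hk
  exact ⟨k, hk, by rw [flat, hkeq, NN_eq_sum_take f hk]⟩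

lemma sum_flat (n : ℕ) (f : ℕ → ℕ) : (flat n f).sum = NN n f := by
  rw [flat, sum_filter_ne_zero, NN_eq_sum_take f le_rfl, List.take_of_length_le (by simp)]

lemma ne_zero_of_mem_flat {n : ℕ} {f : ℕ → ℕ} {x : ℕ} (hx : x ∈ flat n f) : x ≠ 0 := by
  simpa [flat] using (List.mem_filter.mp hx).2

lemma refines_flat_of_NN {n : ℕ} {d b : ℕ → ℕ} (hsum : NN n d = NN n b)
    (h : ∀ k ≤ n, ∃ m ≤ n, NN k d = NN m b) : Refines (flat n b) (flat n d) := by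
  refine refines_of_forall_exists_sum_take_eq _ _ (fun _ => ne_zero_of_mem_flat)
    (fun _ => ne_zero_of_mem_flat) (by rw [sum_flat, sum_flat, hsum]) fun j => ?_
  obtain ⟨k, hk, hkeq⟩ := exists_sum_take_flat_eq_NN d n j
  obtain ⟨m, hm, hmeq⟩ := h k hk
  obtain ⟨j', hj'⟩ := exists_NN_eq_sum_take_flat b hm
  exact ⟨j', by rw [hkeq, hmeq, hj']⟩

lemma Refines.exists_NN_eq {n : ℕ} {d b : ℕ → ℕ} (h : Refines (flat n b) (flat n d))
    {k : ℕ} (hk : k ≤ n) : ∃ m ≤ n, NN k d = NN m b := by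
  obtain ⟨j, hj⟩ := exists_NN_eq_sum_take_flat d hk
  obtain ⟨j', hj'⟩ := h.exists_sum_take_eq j
  obtain ⟨m, hm, hmeq⟩ := exists_sum_take_flat_eq_NN b n j'
  exact ⟨m, hm, by rw [hj, hj', hmeq]⟩

end Refinement

section TValues

variable {n : ℕ} {a : ℕ → ℕ} {S : ℕ × ℕ → ℕ}

lemma tval_NN : tval n a S (NN n a) =
    if colOf n a S (NN n a) = 1 then (rowOf n a S (NN n a) : ℤ) else (n : ℤ) := by
  simp [tval, tvalAux]

lemma tval_of_lt {i : ℕ} (h : i < NN n a) :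
    tval n a S i =
      if colOf n a S i ≤ colOf n a S (i + 1) then
        (if colOf n a S i = 1 then min (rowOf n a S i : ℤ) (tval n a S (i + 1) - 1)
         else tval n a S (i + 1) - 1)
      else tval n a S (i + 1) := by
  have hm : NN n a - i = (NN n a - (i + 1)) + 1 := by omega
  rw [tval, hm, tvalAux, show NN n a - (NN n a - (i + 1) + 1) = i by omega]
  rfl

lemma tval_le_sub_one {i : ℕ} (h : i < NN n a) (hbreak : colOf n a S i ≤ colOf n a S (i + 1)) :
    tval n a S i ≤ tval n a S (i + 1) - 1 := by
  rw [tval_of_lt h, if_pos hbreak]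
  split_ifs <;> omega

lemma tval_eq_tval_succ {i : ℕ} (h : i < NN n a)
    (hbreak : ¬ colOf n a S i ≤ colOf n a S (i + 1)) : tval n a S i = tval n a S (i + 1) := by
  rw [tval_of_lt h, if_neg hbreak]

lemma tval_monotoneOn : MonotoneOn (tval n a S) (Set.Icc 1 (NN n a)) := by
  refine monotoneOn_of_le_add_one Set.ordConnected_Icc fun i _ _ hi1 => ?_
  by_cases hbreak : colOf n a S i ≤ colOf n a S (i + 1)
  · have := tval_le_sub_one (S := S) hi1.2 hbreak
    omega
  · exact (tval_eq_tval_succ hi1.2 hbreak).le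

lemma tval_le (hS : IsStandardFilling n a S) {i : ℕ} (h1 : 1 ≤ i) (h2 : i ≤ NN n a) :
    tval n a S i ≤ n := by
  induction h2 using Nat.decreasingInduction with
  | self =>
    rw [tval_NN]
    split_ifs
    · exact_mod_cast hS.rowOf_le h1 le_rfl
    · exact le_rfl
  | of_succ i hi ih =>
    have := ih (by omega)
    have := hS.rowOf_le h1 hi.le
    rw [tval_of_lt hi]
    split_ifs <;> omega

lemma tval_le_rowOf (hS : IsStandardFilling n a S) {i : ℕ} (h1 : 1 ≤ i) (h2 : i ≤ NN n a)
    (hcol : colOf n a S i = 1) : tval n a S i ≤ rowOf n a S i := by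
  rcases h2.lt_or_eq with h | rfl
  · have hbreak : colOf n a S i ≤ colOf n a S (i + 1) := by
      rw [hcol]
      exact hS.one_le_colOf (by omega) h
    rw [tval_of_lt h, if_pos hbreak, if_pos hcol]
    exact min_le_left _ _
  · rw [tval_NN, if_pos hcol]

/-- The breaks `colOf i ≤ colOf (i + 1)` are the boundaries between the blocks defining
`des S`. -/
def IsBlockMonotone (n : ℕ) (a : ℕ → ℕ) (S : ℕ × ℕ → ℕ) (w : ℕ → ℕ) : Prop :=
  ∀ i, 1 ≤ i → i < NN n a →
    w i ≤ w (i + 1) ∧ (colOf n a S i ≤ colOf n a S (i + 1) → w i < w (i + 1))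

lemma le_tval {w : ℕ → ℕ} (hw : IsBlockMonotone n a S w)
    (hrow : ∀ i, 1 ≤ i → i ≤ NN n a → colOf n a S i = 1 → w i ≤ rowOf n a S i)
    (hn : ∀ i, 1 ≤ i → i ≤ NN n a → w i ≤ n) {i : ℕ} (h1 : 1 ≤ i) (h2 : i ≤ NN n a) :
    (w i : ℤ) ≤ tval n a S i := by
  induction h2 using Nat.decreasingInduction with
  | self =>
    rw [tval_NN]
    split_ifs with hcol
    · exact_mod_cast hrow _ h1 le_rfl hcol
    · exact_mod_cast hn _ h1 le_rfl
  | of_succ i hi ih =>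
    have hsucc := ih (by omega)
    obtain ⟨hmono, hjump⟩ := hw i h1 hi
    rw [tval_of_lt hi]
    split_ifs with hbreak hcol
    · have := hjump hbreak
      have := hrow i h1 hi.le hcol
      omega
    · have := hjump hbreak
      omega
    · omega

lemma IsBlockMonotone.monotoneOn {w : ℕ → ℕ} (hw : IsBlockMonotone n a S w) :
    MonotoneOn w (Set.Icc 1 (NN n a)) :=
  monotoneOn_of_le_add_one Set.ordConnected_Icc fun i _ hi hi1 => (hw i hi.1 hi1.2).1

/-- Labels sharing a value of a block-monotone `w` lie in one block, hence in strictly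
decreasing columns. -/
lemma IsBlockMonotone.colOf_lt {w : ℕ → ℕ} (hw : IsBlockMonotone n a S w) {i j : ℕ}
    (h1 : 1 ≤ i) (hij : i < j) (h2 : j ≤ NN n a) (hwij : w i = w j) :
    colOf n a S j < colOf n a S i := by
  induction j, hij using Nat.le_induction with
  | base =>
    by_contra! h
    exact ((hw i h1 h2).2 h).ne hwij
  | succ j hij ih =>
    have hwij' : w i ≤ w j := hw.monotoneOn ⟨h1, by omega⟩ ⟨by omega, by omega⟩ (by omega)
    have hwj : w j ≤ w (j + 1) := (hw j (by omega) h2).1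
    have hnobreak : colOf n a S (j + 1) < colOf n a S j := by
      by_contra! h
      exact ((hw j (by omega) h2).2 h).ne (by omega)
    exact hnobreak.trans (ih (by omega) (by omega))

end TValues

section DescentComposition

variable {n : ℕ} {a : ℕ → ℕ} {S : ℕ × ℕ → ℕ}

/-- The weak descent composition of a standard filling, ignoring virtuality. -/
def desComp (n : ℕ) (a : ℕ → ℕ) (S : ℕ × ℕ → ℕ) : ℕ → ℕ := fun r =>
  #{i ∈ Icc 1 (NN n a) | tval n a S i = (r : ℤ)}

def IsNonvirtual (n : ℕ) (a : ℕ → ℕ) (S : ℕ × ℕ → ℕ) : Prop :=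
  ∀ i ∈ Icc 1 (NN n a), 1 ≤ tval n a S i

lemma IsNonvirtual.toNat_tval (hv : IsNonvirtual n a S) {i : ℕ} (hi : i ∈ Icc 1 (NN n a)) :
    ((tval n a S i).toNat : ℤ) = tval n a S i :=
  Int.toNat_of_nonneg (by have := hv i hi; omega)

lemma desOpt_eq : desOpt n a S =
    if IsNonvirtual n a S then some (desComp n a S) else none := rfl

lemma NN_desComp (hv : IsNonvirtual n a S) (k : ℕ) :
    NN k (desComp n a S) = #{i ∈ Icc 1 (NN n a) | tval n a S i ≤ k} := by
  have key := sum_card_filter_eq_card_filter_le (Icc 1 (NN n a)) (fun i => (tval n a S i).toNat)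
    (fun i hi => by have := hv.toNat_tval hi; have := hv i hi; omega) k
  have hrhs : #{i ∈ Icc 1 (NN n a) | tval n a S i ≤ k} =
      #{i ∈ Icc 1 (NN n a) | (tval n a S i).toNat ≤ k} :=
    congrArg card (filter_congr fun i hi => by have := hv.toNat_tval hi; omega)
  rw [hrhs, ← key]
  refine sum_congr rfl fun r _ => congrArg card (filter_congr fun i hi => ?_)
  have := hv.toNat_tval hi
  omega

lemma NN_desComp_self (hS : IsStandardFilling n a S) (hv : IsNonvirtual n a S) :
    NN n (desComp n a S) = NN n a := by
  rw [NN_desComp hv, filter_true_of_mem fun i hi => tval_le hS (mem_Icc.mp hi).1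
    (mem_Icc.mp hi).2]
  simp

/-- Labels with `t`-value at most `k` form an initial segment, which ends at a block break. -/
lemma colOf_le_colOf_of_card_filter_tval_le {k : ℤ} {C : ℕ}
    (hC : #{i ∈ Icc 1 (NN n a) | tval n a S i ≤ k} = C) (hpos : 0 < C) (hlt : C < NN n a) :
    colOf n a S C ≤ colOf n a S (C + 1) := by
  have hIcc := filter_le_eq_Icc_card (tval_monotoneOn (n := n) (a := a) (S := S)) (k := k)
  rw [hC] at hIcc
  have hin : C ∈ {i ∈ Icc 1 (NN n a) | tval n a S i ≤ k} := by
    rw [hIcc, Finset.mem_Icc]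
    exact ⟨hpos, le_rfl⟩
  have hout : C + 1 ∉ {i ∈ Icc 1 (NN n a) | tval n a S i ≤ k} := by
    rw [hIcc, Finset.mem_Icc]
    omega
  simp only [Finset.mem_filter, Finset.mem_Icc, not_and, not_le] at hin hout
  by_contra h
  have := tval_eq_tval_succ hlt h
  have := hout ⟨by omega, hlt⟩
  omega

end DescentComposition

section Fillings

variable {n : ℕ} {a : ℕ → ℕ}

lemma sum_single_apply {γ M : Type*} [AddCommMonoid M] (s : Finset γ) (g : γ → M) (x : γ) :
    (∑ c ∈ s, Finsupp.single c (g c)) x = if x ∈ s then g x else 0 := by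
  classical
  simp [Finsupp.finsetSum_apply, Finsupp.single_apply]

lemma mem_Fillings {B : ℕ} {T : (ℕ × ℕ) →₀ ℕ} :
    T ∈ Fillings n a B ↔ T.support ⊆ keyDiagram n a ∧ ∀ c ∈ keyDiagram n a, T c ∈ Icc 1 B :=
  mem_finsupp_iff

lemma sum_single_mem_Fillings {B : ℕ} {g : ℕ × ℕ → ℕ}
    (hg : ∀ c ∈ keyDiagram n a, g c ∈ Icc 1 B) :
    ∑ c ∈ keyDiagram n a, Finsupp.single c (g c) ∈ Fillings n a B := by
  refine mem_Fillings.mpr ⟨fun c hc => ?_, fun c hc => ?_⟩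
  · by_contra h
    rw [Finsupp.mem_support_iff, sum_single_apply, if_neg h] at hc
    exact hc rfl
  · rw [sum_single_apply, if_pos hc]
    exact hg c hc

lemma sum_single_eq_of_mem_Fillings {B : ℕ} {g : ℕ × ℕ → ℕ} {T : (ℕ × ℕ) →₀ ℕ}
    (hT : T ∈ Fillings n a B) (h : ∀ c ∈ keyDiagram n a, g c = T c) :
    ∑ c ∈ keyDiagram n a, Finsupp.single c (g c) = T := by
  ext c
  rw [sum_single_apply]
  split_ifs with hc
  · exact h c hc
  · by_contra hne
    exact hc ((mem_Fillings.mp hT).1 (Finsupp.mem_support_iff.mpr (Ne.symm hne)))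

lemma mem_SKTset {S : (ℕ × ℕ) →₀ ℕ} : S ∈ SKTset n a ↔
    S ∈ Fillings n a (NN n a) ∧ IsStandardFilling n a S ∧ IsKeyTableau n a S :=
  Finset.mem_filter

lemma mem_SSKTset {T : (ℕ × ℕ) →₀ ℕ} :
    T ∈ SSKTset n a ↔ T ∈ Fillings n a n ∧ IsKeyTableau n a T ∧ RowBounded n a T :=
  Finset.mem_filter

variable {T : ℕ × ℕ → ℕ}

lemma wtF_apply (m : ℕ) : wtF n a T m = #{c ∈ keyDiagram n a | T c = m} := by
  rw [wtF, Finsupp.finsetSum_apply, card_filter]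
  refine sum_congr rfl fun c _ => ?_
  rw [Finsupp.single_apply]

lemma NN_wtF (hpos : ∀ c ∈ keyDiagram n a, 1 ≤ T c) (k : ℕ) :
    NN k (wtF n a T) = #{c ∈ keyDiagram n a | T c ≤ k} := by
  simp only [NN, wtF_apply]
  exact sum_card_filter_eq_card_filter_le _ T hpos k

lemma support_wtF_subset {B : ℕ} (hT : ∀ c ∈ keyDiagram n a, T c ∈ Icc 1 B) :
    (wtF n a T).support ⊆ Icc 1 B := by
  intro m hm
  rw [Finsupp.mem_support_iff, wtF_apply] at hm
  obtain ⟨c, hc⟩ := card_pos.mp (Nat.pos_of_ne_zero hm)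
  rw [Finset.mem_filter] at hc
  exact hc.2 ▸ hT c hc.1

lemma IsKeyTableau.congr {T' : ℕ × ℕ → ℕ} (hK : IsKeyTableau n a T)
    (h : Set.EqOn T T' (keyDiagram n a)) : IsKeyTableau n a T' := by
  obtain ⟨h1, h2, h3, h4⟩ := hK
  refine ⟨fun c hc => ?_, fun c hc d hd hcd hne => ?_, fun r c hrc hrc1 => ?_,
    fun r r' c hrc hr'c hrr' hlt => ?_⟩
  · rw [← h hc]
    exact h1 c hc
  · rw [← h hc, ← h hd]
    exact h2 c hc d hd hcd hne
  · rw [← h hrc, ← h hrc1]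
    exact h3 r c hrc hrc1
  · rw [← h hrc, ← h hr'c] at hlt
    obtain ⟨hm, hl⟩ := h4 r r' c hrc hr'c hrr' hlt
    rw [← h hrc, ← h hm]
    exact ⟨hm, hl⟩

lemma IsKeyTableau.rowBounded (hK : IsKeyTableau n a T)
    (hcol : ∀ r, (r, 1) ∈ keyDiagram n a → T (r, 1) ≤ r) : RowBounded n a T := by
  rintro ⟨r, j⟩ hc
  have hj := (mem_keyDiagram.mp hc).2.2.1
  induction j, hj using Nat.le_induction with
  | base => exact hcol r hc
  | succ j hj ih =>
    have hleft : (r, j) ∈ keyDiagram n a := by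
      rw [mem_keyDiagram] at hc ⊢
      exact ⟨hc.1, hc.2.1, hj, (Nat.le_succ j).trans hc.2.2.2⟩
    exact (hK.2.2.1 r j hleft hc).trans (ih hleft)

end Fillings

section BlockMonotoneComposition

variable {n : ℕ} {a : ℕ → ℕ} {S : ℕ × ℕ → ℕ} {w : ℕ → ℕ}
  (hS : IsStandardFilling n a S) (hw : IsBlockMonotone n a S w)
include hS hw

lemma comp_le_comp {c d : ℕ × ℕ} (hc : c ∈ keyDiagram n a) (hd : d ∈ keyDiagram n a)
    (h : S c ≤ S d) : w (S c) ≤ w (S d) :=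
  hw.monotoneOn (hS.mem_Icc hc) (hS.mem_Icc hd) h

lemma snd_lt_snd_of_comp_eq {c d : ℕ × ℕ} (hc : c ∈ keyDiagram n a)
    (hd : d ∈ keyDiagram n a) (hlt : S c < S d) (heq : w (S c) = w (S d)) : d.2 < c.2 := by
  have := hw.colOf_lt (hS.mem_Icc hc).1 hlt (hS.mem_Icc hd).2 heq
  rwa [hS.colOf_apply hc, hS.colOf_apply hd] at this

lemma colDistinct_comp : ColDistinct n a (w ∘ S) := by
  intro c hc d hd hcol hne heq
  have hSne : S c ≠ S d := fun h => hne (hS.eq_of_apply_eq hc hd h)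
  rcases lt_or_gt_of_ne hSne with h | h
  · have := snd_lt_snd_of_comp_eq hS hw hc hd h heq
    omega
  · have := snd_lt_snd_of_comp_eq hS hw hd hc h heq.symm
    omega

lemma isKeyTableau_comp (hK : IsKeyTableau n a S)
    (hw1 : ∀ i, 1 ≤ i → i ≤ NN n a → 1 ≤ w i) : IsKeyTableau n a (w ∘ S) := by
  refine ⟨fun c hc => hw1 _ (hS.mem_Icc hc).1 (hS.mem_Icc hc).2, colDistinct_comp hS hw,
    fun r c hrc hrc1 => comp_le_comp hS hw hrc1 hrc (hK.2.2.1 r c hrc hrc1),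
    fun r r' c hrc hr'c hrr' hlt => ?_⟩
  have hSlt : S (r, c) < S (r', c) := by
    by_contra! h
    exact (comp_le_comp hS hw hr'c hrc h).not_gt hlt
  obtain ⟨hmem, hSlt2⟩ := hK.2.2.2 r r' c hrc hr'c hrr' hSlt
  refine ⟨hmem, lt_of_le_of_ne (comp_le_comp hS hw hrc hmem hSlt2.le) fun heq => ?_⟩
  have := snd_lt_snd_of_comp_eq hS hw hrc hmem hSlt2 heq
  simp at this

lemma stdize_comp {c : ℕ × ℕ} (hc : c ∈ keyDiagram n a) : stdize n a (w ∘ S) c = S c := by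
  have hfilter : {d ∈ keyDiagram n a | (w ∘ S) d < (w ∘ S) c ∨
      ((w ∘ S) d = (w ∘ S) c ∧ c.2 ≤ d.2)} = {d ∈ keyDiagram n a | S d ≤ S c} := by
    refine filter_congr fun d hd => ?_
    simp only [Function.comp_apply]
    constructor
    · rintro (h | ⟨h, h2⟩) <;> by_contra! hlt
      · exact (comp_le_comp hS hw hc hd hlt.le).not_gt h
      · exact (snd_lt_snd_of_comp_eq hS hw hc hd hlt h.symm).not_ge h2
    · intro h
      rcases h.lt_or_eq with hlt | heq
      · rcases (comp_le_comp hS hw hd hc hlt.le).lt_or_eq with h' | h'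
        · exact Or.inl h'
        · exact Or.inr ⟨h', (snd_lt_snd_of_comp_eq hS hw hd hc hlt h').le⟩
      · obtain rfl := hS.eq_of_apply_eq hd hc heq
        exact Or.inr ⟨rfl, le_rfl⟩
  rw [stdize, hfilter, hS.card_filter_apply (· ≤ S c)]
  have : {i ∈ Icc 1 (NN n a) | i ≤ S c} = Icc 1 (S c) := by
    ext i
    simp only [Finset.mem_filter, Finset.mem_Icc]
    have := (hS.mem_Icc hc).2
    omega
  simp [this]

end BlockMonotoneComposition

section StandardizeKeyTableau

variable {n : ℕ} {a : ℕ → ℕ} {T : ℕ × ℕ → ℕ}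

lemma stdF_apply_of_mem {c : ℕ × ℕ} (hc : c ∈ keyDiagram n a) :
    stdF n a T c = stdize n a T c := by
  rw [stdF, sum_single_apply, if_pos hc]

lemma isStandardFilling_stdF (hT : ColDistinct n a T) : IsStandardFilling n a (stdF n a T) :=
  (stdize_bijOn hT).congr fun _ hc => (stdF_apply_of_mem hc).symm

lemma stdF_lt_stdF_iff (hT : ColDistinct n a T) {c d : ℕ × ℕ} (hc : c ∈ keyDiagram n a)
    (hd : d ∈ keyDiagram n a) : stdF n a T c < stdF n a T d ↔ StdLt T c d := by
  rw [stdF_apply_of_mem hc, stdF_apply_of_mem hd]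
  exact stdize_lt_stdize_iff hT hc hd

lemma isKeyTableau_stdF (hK : IsKeyTableau n a T) : IsKeyTableau n a (stdF n a T) := by
  have hT : ColDistinct n a T := hK.2.1
  have hS := isStandardFilling_stdF hT
  refine ⟨fun c hc => (hS.mem_Icc hc).1, fun c hc d hd _ hne h => hne (hS.eq_of_apply_eq hc hd h),
    fun r c hrc hrc1 => ((stdF_lt_stdF_iff hT hrc1 hrc).mpr ?_).le,
    fun r r' c hrc hr'c hrr' hlt => ?_⟩
  · have := hK.2.2.1 r c hrc hrc1
    unfold StdLt
    omega
  · have hTlt : T (r, c) < T (r', c) := by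
      have := (stdF_lt_stdF_iff hT hrc hr'c).mp hlt
      unfold StdLt at this
      omega
    obtain ⟨hmem, hlt2⟩ := hK.2.2.2 r r' c hrc hr'c hrr' hTlt
    exact ⟨hmem, (stdF_lt_stdF_iff hT hrc hmem).mpr (Or.inl hlt2)⟩

/-- Reading the entries of `T` in the order of its standardization is block-monotone: equal
entries are numbered from right to left, i.e. in strictly decreasing columns. -/
lemma isBlockMonotone_stdF (hT : ColDistinct n a T) :
    IsBlockMonotone n a (stdF n a T) (fun i => T (cellOf n a (stdF n a T) i)) := by
  have hS := isStandardFilling_stdF hT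
  intro i h1 h2
  dsimp only
  obtain ⟨hc, hci⟩ := hS.cellOf_mem h1 h2.le
  obtain ⟨hd, hdi⟩ := hS.cellOf_mem (by omega : 1 ≤ i + 1) h2
  have hlt := (stdF_lt_stdF_iff hT hc hd).mp (by rw [hci, hdi]; omega)
  have hcol : ∀ j, (cellOf n a (stdF n a T) j).2 = colOf n a (stdF n a T) j := fun _ => rfl
  unfold StdLt at hlt
  rw [hcol, hcol] at hlt
  exact ⟨by omega, fun h => by omega⟩

lemma le_tval_stdF (hK : IsKeyTableau n a T) (hR : RowBounded n a T) {i : ℕ} (h1 : 1 ≤ i)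
    (h2 : i ≤ NN n a) : (T (cellOf n a (stdF n a T) i) : ℤ) ≤ tval n a (stdF n a T) i := by
  have hS := isStandardFilling_stdF hK.2.1
  refine le_tval (isBlockMonotone_stdF hK.2.1) (fun j h1 h2 _ => hR _ (hS.cellOf_mem h1 h2).1)
    (fun j h1 h2 => (hR _ (hS.cellOf_mem h1 h2).1).trans (hS.rowOf_le h1 h2)) h1 h2

lemma isNonvirtual_stdF (hK : IsKeyTableau n a T) (hR : RowBounded n a T) :
    IsNonvirtual n a (stdF n a T) := by
  intro i hi
  obtain ⟨h1, h2⟩ := Finset.mem_Icc.mp hi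
  have := hK.1 _ ((isStandardFilling_stdF hK.2.1).cellOf_mem h1 h2).1
  have := le_tval_stdF hK hR h1 h2
  omega

lemma NN_wtF_eq_card (hK : IsKeyTableau n a T) (k : ℕ) :
    NN k (wtF n a T) = #{i ∈ Icc 1 (NN n a) | T (cellOf n a (stdF n a T) i) ≤ k} := by
  rw [NN_wtF hK.1, (isStandardFilling_stdF hK.2.1).card_filter_cellOf fun c => T c ≤ k]

lemma NN_wtF_self (hT : ∀ c ∈ keyDiagram n a, T c ∈ Icc 1 n) :
    NN n (wtF n a T) = NN n a := by
  rw [NN_wtF fun c hc => (Finset.mem_Icc.mp (hT c hc)).1,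
    filter_true_of_mem fun c hc => (Finset.mem_Icc.mp (hT c hc)).2, card_keyDiagram]

lemma dominates_wtF (hK : IsKeyTableau n a T) (hR : RowBounded n a T) :
    Dominates n (wtF n a T) (desComp n a (stdF n a T)) := by
  intro k _ _
  change NN k (desComp n a (stdF n a T)) ≤ NN k (wtF n a T)
  rw [NN_desComp (isNonvirtual_stdF hK hR), NN_wtF_eq_card hK]
  refine card_le_card fun i hi => ?_
  rw [Finset.mem_filter, Finset.mem_Icc] at hi ⊢
  have := le_tval_stdF hK hR hi.1.1 hi.1.2
  exact ⟨hi.1, by omega⟩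

/-- The partial sums of `des` are the numbers of labels up to a block break; at a break the
entry of `T` jumps, so the same count is a partial sum of the weight. -/
lemma refines_flat_wtF (hK : IsKeyTableau n a T) (hR : RowBounded n a T)
    (hT : ∀ c ∈ keyDiagram n a, T c ∈ Icc 1 n) :
    Refines (flat n (wtF n a T)) (flat n (desComp n a (stdF n a T))) := by
  have hS := isStandardFilling_stdF hK.2.1
  have hv := isNonvirtual_stdF hK hR
  refine refines_flat_of_NN (by rw [NN_desComp_self hS hv, NN_wtF_self hT]) fun k _ => ?_
  rw [NN_desComp hv]
  obtain ⟨C, hC⟩ : ∃ C, #{i ∈ Icc 1 (NN n a) | tval n a (stdF n a T) i ≤ k} = C := ⟨_, rfl⟩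
  have hCN : C ≤ NN n a := hC ▸ (card_filter_le _ _).trans (by simp)
  rw [hC]
  rcases Nat.eq_zero_or_pos C with rfl | hpos
  · exact ⟨0, Nat.zero_le _, rfl⟩
  rcases hCN.lt_or_eq with hlt | rfl
  · have hw := isBlockMonotone_stdF hK.2.1
    have hjump := (hw C hpos hlt).2 (colOf_le_colOf_of_card_filter_tval_le hC hpos hlt)
    refine ⟨T (cellOf n a (stdF n a T) C),
      (hR _ (hS.cellOf_mem hpos hCN).1).trans (hS.rowOf_le hpos hCN), ?_⟩
    rw [NN_wtF_eq_card hK]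
    exact (card_filter_le_apply_eq hw.monotoneOn hpos hlt hjump).symm
  · exact ⟨n, le_rfl, (NN_wtF_self hT).symm⟩

end StandardizeKeyTableau

/-- Destandardization of a standard filling along a weight `b`. -/
noncomputable def destdF (n : ℕ) (a : ℕ → ℕ) (b : ℕ → ℕ) (S : ℕ × ℕ → ℕ) : (ℕ × ℕ) →₀ ℕ :=
  ∑ c ∈ keyDiagram n a, Finsupp.single c (muOf b (S c))

section DestandardizeKeyTableau

variable {n : ℕ} {a : ℕ → ℕ} {S : ℕ × ℕ → ℕ} {b : ℕ → ℕ}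

lemma destdF_apply_of_mem {c : ℕ × ℕ} (hc : c ∈ keyDiagram n a) :
    destdF n a b S c = muOf b (S c) := by
  rw [destdF, sum_single_apply, if_pos hc]

lemma muOf_mem_Icc (hS : IsStandardFilling n a S) (hbN : NN n b = NN n a) {c : ℕ × ℕ}
    (hc : c ∈ keyDiagram n a) : muOf b (S c) ∈ Icc 1 n := by
  have h := hS.mem_Icc hc
  exact Finset.mem_Icc.mpr ⟨one_le_muOf (hbN ▸ h.2) h.1, muOf_le (hbN ▸ h.2)⟩

lemma muOf_le_tval (hS : IsStandardFilling n a S) (hv : IsNonvirtual n a S)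
    (hdom : Dominates n b (desComp n a S)) {i : ℕ} (h1 : 1 ≤ i) (h2 : i ≤ NN n a) :
    (muOf b i : ℤ) ≤ tval n a S i := by
  have hi : i ∈ Icc 1 (NN n a) := Finset.mem_Icc.mpr ⟨h1, h2⟩
  obtain ⟨k, hk⟩ : ∃ k : ℕ, tval n a S i = k := ⟨_, (hv.toNat_tval hi).symm⟩
  have hk1 : 1 ≤ k := by have := hv i hi; omega
  have hkn : k ≤ n := by have := tval_le hS h1 h2; omega
  have hcount : i ≤ NN k (desComp n a S) := by
    have hmem : i ∈ {j ∈ Icc 1 (NN n a) | tval n a S j ≤ k} := by simp [h1, h2, hk]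
    rw [filter_le_eq_Icc_card (tval_monotoneOn (n := n) (a := a)), Finset.mem_Icc] at hmem
    rw [NN_desComp hv]
    exact hmem.2
  have hle : i ≤ NN k b := hcount.trans (hdom k hk1 hkn)
  rw [hk, Nat.cast_le]
  exact (muOf_le_iff hle).mpr hle

/-- At a block break the count of labels is a partial sum of `des S`, hence, by refinement, a
partial sum of `b`, so `muOf b` jumps there. -/
lemma isBlockMonotone_muOf (hS : IsStandardFilling n a S) (hv : IsNonvirtual n a S)
    (hbN : NN n b = NN n a) (href : Refines (flat n b) (flat n (desComp n a S))) :
    IsBlockMonotone n a S (muOf b) := by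
  intro i h1 h2
  have hmono := muOf_monotoneOn (b := b) (n := n)
  rw [hbN] at hmono
  refine ⟨hmono ⟨h1, h2.le⟩ ⟨by omega, h2⟩ (by omega), fun hbreak => ?_⟩
  have hlt : tval n a S i < tval n a S (i + 1) := by
    have := tval_le_sub_one (S := S) h2 hbreak
    omega
  obtain ⟨k, hk⟩ : ∃ k : ℕ, tval n a S i = k :=
    ⟨_, (hv.toNat_tval (Finset.mem_Icc.mpr ⟨h1, h2.le⟩)).symm⟩
  have hkn : k ≤ n := by have := tval_le hS h1 h2.le; omega
  have hcount : NN k (desComp n a S) = i := by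
    rw [NN_desComp hv, ← hk]
    exact card_filter_le_apply_eq tval_monotoneOn h1 h2 hlt
  obtain ⟨m, hm, hmeq⟩ := href.exists_NN_eq hkn
  rw [hcount] at hmeq
  have hNb : i + 1 ≤ NN n b := by omega
  have h₁ : muOf b i ≤ m := (muOf_le_iff (n := n) (by omega)).mpr hmeq.le
  have h₂ : ¬ muOf b (i + 1) ≤ m := fun h => by
    have := (muOf_le_iff hNb).mp h
    omega
  omega

end DestandardizeKeyTableau

section Bijection

variable {n : ℕ} {a : ℕ → ℕ}

open scoped Classical in
/-- The exponents of the monomials of `SlideOpt n (desOpt n a S)`. -/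
noncomputable def slideExponents (n : ℕ) (a : ℕ → ℕ) (S : ℕ × ℕ → ℕ) : Finset (ℕ →₀ ℕ) :=
  if IsNonvirtual n a S then
    ((Icc 1 n).finsuppAntidiag (NN n (desComp n a S))).filter fun b =>
      Dominates n b (desComp n a S) ∧ Refines (flat n b) (flat n (desComp n a S))
  else ∅

lemma slideOpt_desOpt (S : ℕ × ℕ → ℕ) :
    SlideOpt n (desOpt n a S) = ∑ b ∈ slideExponents n a S, MvPolynomial.monomial b 1 := by
  rw [desOpt_eq, slideExponents]
  split_ifs <;> rfl

lemma mem_slideExponents {S : ℕ × ℕ → ℕ} (hS : IsStandardFilling n a S) {b : ℕ →₀ ℕ} :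
    b ∈ slideExponents n a S ↔ IsNonvirtual n a S ∧ NN n b = NN n a ∧ b.support ⊆ Icc 1 n ∧
      Dominates n b (desComp n a S) ∧ Refines (flat n b) (flat n (desComp n a S)) := by
  unfold slideExponents
  split_ifs with hv
  · rw [Finset.mem_filter, mem_finsuppAntidiag, NN_desComp_self hS hv]
    simp only [hv, true_and, and_assoc]
    rfl
  · simp [hv]

variable {T : (ℕ × ℕ) →₀ ℕ}

lemma stdF_mem_SKTset (hT : T ∈ SSKTset n a) : stdF n a T ∈ SKTset n a := by
  obtain ⟨-, hK, -⟩ := mem_SSKTset.mp hT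
  exact mem_SKTset.mpr ⟨sum_single_mem_Fillings fun c hc => by simpa using stdize_mem_Icc hc,
    isStandardFilling_stdF hK.2.1, isKeyTableau_stdF hK⟩

lemma wtF_mem_slideExponents (hT : T ∈ SSKTset n a) :
    wtF n a T ∈ slideExponents n a (stdF n a T) := by
  obtain ⟨hF, hK, hR⟩ := mem_SSKTset.mp hT
  have hval := (mem_Fillings.mp hF).2
  exact (mem_slideExponents (isStandardFilling_stdF hK.2.1)).mpr ⟨isNonvirtual_stdF hK hR,
    NN_wtF_self hval, support_wtF_subset hval, dominates_wtF hK hR, refines_flat_wtF hK hR hval⟩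

lemma destdF_wtF_stdF (hT : T ∈ SSKTset n a) : destdF n a (wtF n a T) (stdF n a T) = T := by
  obtain ⟨hF, hK, -⟩ := mem_SSKTset.mp hT
  have hval := (mem_Fillings.mp hF).2
  refine sum_single_eq_of_mem_Fillings hF fun c hc => ?_
  have hTc := hK.1 c hc
  rw [stdF_apply_of_mem hc]
  refine muOf_eq (n := n) ?_ ?_ ?_
  · rw [NN_wtF_self hval]
    exact (stdize_mem_Icc hc).2
  · rw [NN_wtF hK.1]
    refine lt_of_eq_of_lt (congrArg card (filter_congr fun d _ => ?_)) (card_filter_lt_lt_stdize hc)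
    omega
  · rw [NN_wtF hK.1]
    exact stdize_le_card_filter_le c

variable {S : (ℕ × ℕ) →₀ ℕ} {b : ℕ →₀ ℕ}

lemma destdF_eqOn (b : ℕ → ℕ) :
    Set.EqOn (muOf b ∘ S) (destdF n a b S) (keyDiagram n a) :=
  fun _ hc => (destdF_apply_of_mem hc).symm

lemma destdF_mem_SSKTset (hS : S ∈ SKTset n a) (hb : b ∈ slideExponents n a S) :
    destdF n a b S ∈ SSKTset n a := by
  obtain ⟨-, hSt, hK⟩ := mem_SKTset.mp hS
  obtain ⟨hv, hbN, -, hdom, href⟩ := (mem_slideExponents hSt).mp hb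
  have hK' := (isKeyTableau_comp hSt (isBlockMonotone_muOf hSt hv hbN href) hK
    fun i h1 h2 => one_le_muOf (hbN ▸ h2) h1).congr (destdF_eqOn b)
  refine mem_SSKTset.mpr ⟨sum_single_mem_Fillings fun c hc => muOf_mem_Icc hSt hbN hc, hK',
    hK'.rowBounded fun r hr => ?_⟩
  have h := hSt.mem_Icc hr
  have := muOf_le_tval hSt hv hdom h.1 h.2
  have := tval_le_rowOf hSt h.1 h.2 (hSt.colOf_apply hr)
  rw [hSt.rowOf_apply hr] at this
  rw [destdF_apply_of_mem hr]
  omega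

lemma stdF_destdF (hS : S ∈ SKTset n a) (hb : b ∈ slideExponents n a S) :
    stdF n a (destdF n a b S) = S := by
  obtain ⟨hF, hSt, -⟩ := mem_SKTset.mp hS
  obtain ⟨hv, hbN, -, -, href⟩ := (mem_slideExponents hSt).mp hb
  refine sum_single_eq_of_mem_Fillings hF fun c hc => ?_
  rw [← stdize_congr (destdF_eqOn b) hc]
  exact stdize_comp hSt (isBlockMonotone_muOf hSt hv hbN href) hc

lemma wtF_destdF (hS : S ∈ SKTset n a) (hb : b ∈ slideExponents n a S) :
    wtF n a (destdF n a b S) = b := by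
  obtain ⟨-, hSt, -⟩ := mem_SKTset.mp hS
  obtain ⟨-, hbN, hsupp, -, -⟩ := (mem_slideExponents hSt).mp hb
  have hval : ∀ c ∈ keyDiagram n a, destdF n a b S c ∈ Icc 1 n := fun c hc => by
    rw [destdF_apply_of_mem hc]
    exact muOf_mem_Icc hSt hbN hc
  refine eq_of_NN_eq (support_wtF_subset hval) hsupp fun m hm => ?_
  rw [NN_wtF fun c hc => (Finset.mem_Icc.mp (hval c hc)).1]
  calc #{c ∈ keyDiagram n a | destdF n a b S c ≤ m}
      = #{c ∈ keyDiagram n a | muOf b (S c) ≤ m} :=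
        congrArg card (filter_congr fun c hc => by rw [destdF_apply_of_mem hc])
    _ = #{i ∈ Icc 1 (NN n a) | muOf b i ≤ m} := hSt.card_filter_apply (muOf b · ≤ m)
    _ = NN m b := by rw [← hbN, card_filter_muOf_le hm]

end Bijection

end NSMac

/-- For every weak composition `a` of length `n`,
`κ_a = Σ_{T ∈ SKT(a)} 𝔉_{des T} = Σ_{T ∈ SSKT(a)} x^{wt T}`. -/
theorem NSMac.key_polynomial_eq_sskt_generating_function (n : ℕ) (a : ℕ → ℕ) :
    kappa n a =
      ∑ T ∈ SSKTset n a, MvPolynomial.monomial (wtF n a ⇑T) (1 : Polynomial ℤ) := by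
  calc kappa n a
      = ∑ S ∈ SKTset n a, ∑ b ∈ slideExponents n a S, MvPolynomial.monomial b 1 :=
        sum_congr rfl fun S _ => slideOpt_desOpt S
    _ = ∑ p ∈ (SKTset n a).sigma fun S => slideExponents n a S, MvPolynomial.monomial p.2 1 :=
        by rw [sum_sigma]
    _ = ∑ T ∈ SSKTset n a, MvPolynomial.monomial (wtF n a T) 1 := by
      refine sum_nbij' (fun p => destdF n a p.2 p.1) (fun T => ⟨stdF n a T, wtF n a T⟩)
        (fun p hp => destdF_mem_SSKTset (mem_sigma.mp hp).1 (mem_sigma.mp hp).2)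
        (fun T hT => mem_sigma.mpr ⟨stdF_mem_SKTset hT, wtF_mem_slideExponents hT⟩)
        (fun p hp => ?_) (fun T hT => destdF_wtF_stdF hT)
        (fun p hp => by rw [wtF_destdF (mem_sigma.mp hp).1 (mem_sigma.mp hp).2])
      obtain ⟨hS, hb⟩ := mem_sigma.mp hp
      exact Sigma.ext (stdF_destdF hS hb) (heq_of_eq (wtF_destdF hS hb))
end

section
/- Let a be a weak composition of length n with N=a_1+⋯+a_n. For all i,j with 1<i<N, 1<j<N and |i−j|≥3, and every standard key tabloid T∈SKD(a), the involutions commute: ψ_i(ψ_j(T))=ψ_j(ψ_i(T)). -/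
open scoped Classical
open Finset

namespace NSMac

noncomputable section

/-- `τ` maps `S` into itself and is the identity off `S`. -/
def FixSet (τ : ℕ → ℕ) (S : Set ℕ) : Prop :=
  (∀ m ∈ S, τ m ∈ S) ∧ (∀ m ∉ S, τ m = m)

lemma FixSet.preim {τ : ℕ → ℕ} {S : Set ℕ} (h : FixSet τ S) {k : ℕ} (hk : k ∉ S)
    (m : ℕ) : τ m = k ↔ m = k := by
  constructor
  · intro hm
    by_cases hmS : m ∈ S
    · exact absurd (hm ▸ h.1 m hmS) hk
    · rw [h.2 m hmS] at hm; exact hm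
  · rintro rfl; exact h.2 m hk

lemma FixSet.id (S : Set ℕ) : FixSet id S :=
  ⟨fun m hm => hm, fun m _ => rfl⟩

lemma FixSet.comm {σ τ : ℕ → ℕ} {A B : Set ℕ} (hσ : FixSet σ A) (hτ : FixSet τ B)
    (hAB : Disjoint A B) : σ ∘ τ = τ ∘ σ := by
  funext m
  by_cases hA : m ∈ A
  · have hB : m ∉ B := fun h => Set.disjoint_left.mp hAB hA h
    have h1 : τ m = m := hτ.2 m hB
    have h2 : τ (σ m) = σ m := hτ.2 _ (fun h => Set.disjoint_left.mp hAB (hσ.1 m hA) h)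
    simp [Function.comp, h1, h2]
  · by_cases hB : m ∈ B
    · have h1 : σ m = m := hσ.2 m hA
      have h2 : σ (τ m) = τ m := hσ.2 _ (fun h => Set.disjoint_right.mp hAB (hτ.1 m hB) h)
      simp [Function.comp, h1, h2]
    · simp [Function.comp, hσ.2 m hA, hτ.2 m hB]

lemma fix_rho1 (i : ℕ) : FixSet (rho1 i) {i - 1, i, i + 1} := by
  constructor
  · intro m hm
    simp only [Set.mem_insert_iff, Set.mem_singleton_iff] at hm ⊢
    unfold rho1
    split_ifs <;> tauto
  · intro m hm
    simp only [Set.mem_insert_iff, Set.mem_singleton_iff, not_or] at hm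
    simp [rho1, hm.1, hm.2.1, hm.2.2]

lemma fix_rho2 (i : ℕ) : FixSet (rho2 i) {i - 1, i, i + 1} := by
  constructor
  · intro m hm
    simp only [Set.mem_insert_iff, Set.mem_singleton_iff] at hm ⊢
    unfold rho2
    split_ifs <;> tauto
  · intro m hm
    simp only [Set.mem_insert_iff, Set.mem_singleton_iff, not_or] at hm
    simp [rho2, hm.1, hm.2.1, hm.2.2]

lemma fix_swap1 (i : ℕ) : FixSet (swapVals (i - 1) i) {i - 1, i, i + 1} := by
  constructor
  · intro m hm
    simp only [Set.mem_insert_iff, Set.mem_singleton_iff] at hm ⊢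
    unfold swapVals
    split_ifs <;> tauto
  · intro m hm
    simp only [Set.mem_insert_iff, Set.mem_singleton_iff, not_or] at hm
    simp [swapVals, hm.1, hm.2.1]

lemma fix_swap2 (i : ℕ) : FixSet (swapVals i (i + 1)) {i - 1, i, i + 1} := by
  constructor
  · intro m hm
    simp only [Set.mem_insert_iff, Set.mem_singleton_iff] at hm ⊢
    unfold swapVals
    split_ifs <;> tauto
  · intro m hm
    simp only [Set.mem_insert_iff, Set.mem_singleton_iff, not_or] at hm
    simp [swapVals, hm.2.1, hm.2.2]

lemma rowOf_comp {n : ℕ} {a : ℕ → ℕ} {τ : ℕ → ℕ} {S : Set ℕ} (h : FixSet τ S)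
    {k : ℕ} (hk : k ∉ S) (T : ℕ × ℕ → ℕ) :
    rowOf n a (τ ∘ T) k = rowOf n a T k := by
  unfold rowOf
  congr 1
  apply Finset.filter_congr
  intro c _
  exact h.preim hk (T c)

lemma colOf_comp {n : ℕ} {a : ℕ → ℕ} {τ : ℕ → ℕ} {S : Set ℕ} (h : FixSet τ S)
    {k : ℕ} (hk : k ∉ S) (T : ℕ × ℕ → ℕ) :
    colOf n a (τ ∘ T) k = colOf n a T k := by
  unfold colOf
  congr 1
  apply Finset.filter_congr
  intro c _
  exact h.preim hk (T c)

lemma cellOf_comp {n : ℕ} {a : ℕ → ℕ} {τ : ℕ → ℕ} {S : Set ℕ} (h : FixSet τ S)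
    {k : ℕ} (hk : k ∉ S) (T : ℕ × ℕ → ℕ) :
    cellOf n a (τ ∘ T) k = cellOf n a T k := by
  unfold cellOf
  rw [rowOf_comp h hk, colOf_comp h hk]

lemma psi_comp' (n : ℕ) (a : ℕ → ℕ) (i : ℕ) (τ : ℕ → ℕ) (S : Set ℕ)
    (hτ : FixSet τ S) (hd : Disjoint ({i - 1, i, i + 1} : Set ℕ) S) (T : ℕ × ℕ → ℕ) :
    psi n a i (τ ∘ T) = τ ∘ psi n a i T := by
  have h1 : (i - 1 : ℕ) ∉ S := Set.disjoint_left.mp hd (by simp)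
  have h2 : i ∉ S := Set.disjoint_left.mp hd (by simp)
  have h3 : (i + 1 : ℕ) ∉ S := Set.disjoint_left.mp hd (by simp)
  have hcomm : ∀ ρ : ℕ → ℕ, FixSet ρ ({i - 1, i, i + 1} : Set ℕ) →
      ρ ∘ (τ ∘ T) = τ ∘ (ρ ∘ T) := by
    intro ρ hρ
    rw [← Function.comp_assoc, ← Function.comp_assoc, hρ.comm hτ hd]
  simp only [psi, cellOf_comp hτ h1, cellOf_comp hτ h2, cellOf_comp hτ h3]
  split_ifs
  · rfl
  · exact hcomm _ (fix_rho2 i)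
  · exact hcomm _ (fix_swap2 i)
  · exact hcomm _ (fix_rho1 i)
  · exact hcomm _ (fix_swap1 i)

lemma psi_eq_comp (n : ℕ) (a : ℕ → ℕ) (i : ℕ) (T : ℕ × ℕ → ℕ) :
    ∃ τ : ℕ → ℕ, FixSet τ ({i - 1, i, i + 1} : Set ℕ) ∧ psi n a i T = τ ∘ T := by
  simp only [psi]
  split_ifs
  · exact ⟨id, FixSet.id _, rfl⟩
  · exact ⟨rho2 i, fix_rho2 i, rfl⟩
  · exact ⟨swapVals i (i + 1), fix_swap2 i, rfl⟩
  · exact ⟨rho1 i, fix_rho1 i, rfl⟩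
  · exact ⟨swapVals (i - 1) i, fix_swap1 i, rfl⟩

end

end NSMac
/-- the involutions `ψ_i` and `ψ_j` commute on standard key tabloids
whenever `|i - j| ≥ 3`. -/
theorem NSMac.psi_commute (n : ℕ) (a : ℕ → ℕ) (i j : ℕ)
    (h1i : 1 < i) (h2i : i < NN n a) (h1j : 1 < j) (h2j : j < NN n a)
    (hij : 3 ≤ |(i : ℤ) - (j : ℤ)|)
    (T : (ℕ × ℕ) →₀ ℕ) (hT : T ∈ SKDset n a) :
    psi n a i (psi n a j ⇑T) = psi n a j (psi n a i ⇑T) := by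
  have hsep : i + 3 ≤ j ∨ j + 3 ≤ i := by
    rcases le_abs.mp hij with h | h <;> omega
  have hd : Disjoint ({i - 1, i, i + 1} : Set ℕ) ({j - 1, j, j + 1} : Set ℕ) := by
    rw [Set.disjoint_left]
    intro m hm hm'
    simp only [Set.mem_insert_iff, Set.mem_singleton_iff] at hm hm'
    omega
  obtain ⟨τj, hτj, hj⟩ := NSMac.psi_eq_comp n a j ⇑T
  obtain ⟨τi, hτi, hi⟩ := NSMac.psi_eq_comp n a i ⇑T
  rw [hj, hi, NSMac.psi_comp' n a i τj _ hτj hd ⇑T,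
    NSMac.psi_comp' n a j τi _ hτi hd.symm ⇑T,
    hi, hj, ← Function.comp_assoc, ← Function.comp_assoc,
    NSMac.FixSet.comm hτj hτi hd.symm]
end

section
/- Let μ be a partition of N. A standard filling T of the Young diagram of μ satisfies comaj(T)=0 and inv(T)=0 if and only if T is a standard Young tableau; that is, {T standard filling of μ : comaj(T)=inv(T)=0} = SYT(μ). -/
open scoped Classical
open Finset

namespace NSMac

lemma mem_kd {ℓ : ℕ} {μ : ℕ → ℕ} {r c : ℕ} :
    (r, c) ∈ keyDiagram ℓ μ ↔ 1 ≤ r ∧ r ≤ ℓ ∧ 1 ≤ c ∧ c ≤ NN ℓ μ ∧ c ≤ μ r := by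
  simp only [keyDiagram, Finset.mem_filter, Finset.mem_product, Finset.mem_Icc]
  tauto

lemma mu_le_NN {ℓ : ℕ} {μ : ℕ → ℕ} {r : ℕ} (h1 : 1 ≤ r) (h2 : r ≤ ℓ) : μ r ≤ NN ℓ μ :=
  Finset.single_le_sum (f := μ) (fun i _ => Nat.zero_le _) (Finset.mem_Icc.mpr ⟨h1, h2⟩)

lemma mk_mem_kd {ℓ : ℕ} {μ : ℕ → ℕ} {r c : ℕ} (h1 : 1 ≤ r) (h2 : r ≤ ℓ) (h3 : 1 ≤ c)
    (h4 : c ≤ μ r) : (r, c) ∈ keyDiagram ℓ μ :=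
  mem_kd.mpr ⟨h1, h2, h3, le_trans h4 (mu_le_NN h1 h2), h4⟩

end NSMac

/-- a standard filling of the Young diagram of a partition `μ` has
`comaj = 0` and `inv = 0` if and only if it is a standard Young tableau. -/
theorem NSMac.comaj_inv_zero_iff_syt (ℓ : ℕ) (μ : ℕ → ℕ) (hμ : IsPartition ℓ μ)
    (T : (ℕ × ℕ) →₀ ℕ) (hT : T ∈ Fillings ℓ μ (NN ℓ μ))
    (hstd : IsStandardFilling ℓ μ ⇑T) :
    (comajY ℓ μ ⇑T = 0 ∧ invY ℓ μ ⇑T = 0) ↔ IsSYT ℓ μ ⇑T := by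
  have hinj : Set.InjOn ⇑T ↑(keyDiagram ℓ μ) := hstd.2.1
  constructor
  · rintro ⟨hcom, hinv⟩
    -- no inversion pairs
    have h0 : ∀ p ∈ ((keyDiagram ℓ μ) ×ˢ (keyDiagram ℓ μ)), ¬ IsInvPair ℓ μ ⇑T p := by
      intro p hp hP
      have hmem : p ∈ ((keyDiagram ℓ μ) ×ˢ (keyDiagram ℓ μ)).filter
          (fun p => IsInvPair ℓ μ ⇑T p) := Finset.mem_filter.mpr ⟨hp, hP⟩
      unfold invY at hinv
      rw [Finset.card_eq_zero] at hinv
      simp [hinv] at hmem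
    -- columns increase
    have hcol : ∀ r c : ℕ, (r, c) ∈ keyDiagram ℓ μ → (r + 1, c) ∈ keyDiagram ℓ μ →
        T (r, c) < T (r + 1, c) := by
      intro r c h1 h2
      by_contra hnlt
      push_neg at hnlt
      have hrpos := (mem_kd.mp h1).1
      have hmem : ((r + 1 : ℕ), c) ∈ (keyDiagram ℓ μ).filter
          (fun d => 2 ≤ d.1 ∧ T d ≤ T (d.1 - 1, d.2)) :=
        Finset.mem_filter.mpr ⟨h2, ⟨by omega, by simpa using hnlt⟩⟩
      unfold comajY at hcom
      have hz := Finset.sum_eq_zero_iff.mp hcom _ hmem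
      have hpos : 0 < legY ℓ μ (r + 1, c) := by
        rw [legY]
        apply Finset.card_pos.mpr
        refine ⟨r + 1, Finset.mem_filter.mpr ⟨Finset.mem_Icc.mpr ⟨le_refl _, (mem_kd.mp h2).2.1⟩,
          (mem_kd.mp h2).2.2.2.2⟩⟩
      omega
    -- adjacent cells in a row increase
    have hrow : ∀ r c : ℕ, (r, c) ∈ keyDiagram ℓ μ → (r, c + 1) ∈ keyDiagram ℓ μ →
        T (r, c) < T (r, c + 1) := by
      intro r
      induction r with
      | zero => intro c h1 _; have := (mem_kd.mp h1).1; omega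
      | succ r ih =>
        intro c h1 h2
        have hne : T (r + 1, c) ≠ T (r + 1, c + 1) := by
          intro he
          have := hinj (Finset.mem_coe.mpr h1) (Finset.mem_coe.mpr h2) he
          simp at this
        rcases Nat.eq_zero_or_pos r with hr0 | hrpos
        · subst hr0
          by_contra hba
          push_neg at hba
          refine h0 ((0 + 1, c), (0 + 1, c + 1)) (Finset.mem_product.mpr ⟨h1, h2⟩) ?_
          unfold IsInvPair
          refine ⟨rfl, Nat.lt_succ_self c, ?_⟩
          rw [if_pos rfl]
          show T (0 + 1, c + 1) < T (0 + 1, c)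
          omega
        · have h1' := mem_kd.mp h1
          have h2' := mem_kd.mp h2
          have hb1 : (r, c) ∈ keyDiagram ℓ μ :=
            mk_mem_kd hrpos (by omega) h1'.2.2.1
              (le_trans h1'.2.2.2.2 (hμ.2 r (r + 1) hrpos (Nat.le_succ r) h1'.2.1))
          have hb2 : (r, c + 1) ∈ keyDiagram ℓ μ :=
            mk_mem_kd hrpos (by omega) (by omega)
              (le_trans h2'.2.2.2.2 (hμ.2 r (r + 1) hrpos (Nat.le_succ r) h2'.2.1))
          have hγα := hcol r c hb1 h1
          have hγ'β := hcol r (c + 1) hb2 h2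
          have hγγ' := ih c hb1 hb2
          by_contra hba
          push_neg at hba
          refine h0 ((r + 1, c), (r + 1, c + 1)) (Finset.mem_product.mpr ⟨h1, h2⟩) ?_
          unfold IsInvPair
          refine ⟨rfl, Nat.lt_succ_self c, ?_⟩
          rw [if_neg (show ¬((r + 1, c) : ℕ × ℕ).1 = 1 by simp; omega)]
          show cyc3 (T (r + 1, c + 1)) (T (r + 1, c)) (T (r + 1 - 1, c))
          simp only [Nat.add_sub_cancel]
          unfold cyc3
          omega
    exact ⟨hstd, hrow, hcol⟩
  · rintro ⟨_, hrow, hcol⟩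
    -- strict increase along rows, general columns
    have hrowM : ∀ r c c' : ℕ, (r, c) ∈ keyDiagram ℓ μ → (r, c') ∈ keyDiagram ℓ μ →
        c < c' → T (r, c) < T (r, c') := by
      intro r c c' h1
      induction c' with
      | zero => intro _ hlt; omega
      | succ d ih =>
        intro h2 hlt
        have h1' := mem_kd.mp h1
        have h2' := mem_kd.mp h2
        rcases Nat.lt_or_ge c d with h | h
        · have hd : (r, d) ∈ keyDiagram ℓ μ :=
            mk_mem_kd h1'.1 h1'.2.1 (by omega) (by omega)
          exact lt_trans (ih hd h) (hrow r d hd h2)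
        · have hcd : c = d := by omega
          subst hcd
          exact hrow r c h1 h2
    constructor
    · -- comajY = 0
      unfold comajY
      apply Finset.sum_eq_zero
      intro p hp
      exfalso
      obtain ⟨hpD, h2, hle⟩ := Finset.mem_filter.mp hp
      obtain ⟨r, c⟩ := p
      simp only at h2 hle
      have hp' := mem_kd.mp hpD
      have hbelow : (r - 1, c) ∈ keyDiagram ℓ μ :=
        mk_mem_kd (by omega) (by omega) hp'.2.2.1
          (le_trans hp'.2.2.2.2 (hμ.2 (r - 1) r (by omega) (by omega) hp'.2.1))
      have he : r - 1 + 1 = r := by omega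
      have := hcol (r - 1) c hbelow (by rw [he]; exact hpD)
      rw [he] at this
      omega
    · -- invY = 0
      unfold invY
      rw [Finset.card_eq_zero, Finset.filter_eq_empty_iff]
      intro p hp
      obtain ⟨⟨r, c⟩, ⟨r', c'⟩⟩ := p
      rintro ⟨hre, hclt, hcond⟩
      simp only at hre hclt hcond
      subst hre
      obtain ⟨h1, h2⟩ := Finset.mem_product.mp hp
      simp only at h1 h2
      have hαβ : T (r, c) < T (r, c') := hrowM r c c' h1 h2 hclt
      by_cases hr1 : r = 1
      · rw [if_pos hr1] at hcond
        omega
      · rw [if_neg hr1] at hcond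
        have h1' := mem_kd.mp h1
        have hbelow : (r - 1, c) ∈ keyDiagram ℓ μ :=
          mk_mem_kd (by omega) (by omega) h1'.2.2.1
            (le_trans h1'.2.2.2.2 (hμ.2 (r - 1) r (by omega) (by omega) h1'.2.1))
        have he : r - 1 + 1 = r := by omega
        have hγα := hcol (r - 1) c hbelow (by rw [he]; exact h1)
        rw [he] at hγα
        unfold cyc3 at hcond
        omega
end

section
/- Let μ=(μ_1≥⋯≥μ_ℓ>0) be a partition of N, and let B_1,…,B_ℓ be pairwise disjoint subsets of {1,…,N} with |B_i|=μ_i for each i and B_1∪⋯∪B_ℓ={1,…,N}. Then there is exactly one standard filling T of the Young diagram of μ with inv(T)=0 (i.e., exactly one standard Young tabloid T∈SYD(μ)) such that for every i, the set of entries of row i of T equals B_i. -/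
open scoped Classical
open Finset

namespace NSMac

lemma cyc3_asymm {u v w : ℕ} (h : cyc3 u v w) : ¬ cyc3 v u w := by
  unfold cyc3 at *; omega

lemma cyc3_of_not {u v w : ℕ} (huv : u ≠ v) (huw : u ≠ w) (hvw : v ≠ w)
    (h : ¬ cyc3 v u w) : cyc3 u v w := by
  unfold cyc3 at *; omega

noncomputable def nextVal (g : ℕ) (s : Finset ℕ) : ℕ :=
  if h : (s.filter (fun x => g < x)).Nonempty then (s.filter (fun x => g < x)).min' h
  else if h2 : s.Nonempty then s.min' h2 else 0

lemma nextVal_mem {g : ℕ} {s : Finset ℕ} (hs : s.Nonempty) : nextVal g s ∈ s := by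
  unfold nextVal
  by_cases h : (s.filter (fun x => g < x)).Nonempty
  · rw [dif_pos h]; exact (Finset.mem_filter.mp ((s.filter _).min'_mem h)).1
  · rw [dif_neg h, dif_pos hs]; exact s.min'_mem hs

lemma nextVal_spec {g : ℕ} {s : Finset ℕ} {x : ℕ} (hx : x ∈ s)
    (hne : x ≠ nextVal g s) (hg : g ∉ s) : cyc3 (nextVal g s) x g := by
  have hxg : x ≠ g := fun e => hg (e ▸ hx)
  have hs : s.Nonempty := ⟨x, hx⟩
  by_cases h : (s.filter (fun y => g < y)).Nonempty
  · have hv : nextVal g s = (s.filter (fun y => g < y)).min' h := by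
      unfold nextVal; rw [dif_pos h]
    have hmm := Finset.mem_filter.mp ((s.filter (fun y => g < y)).min'_mem h)
    rw [hv] at hne ⊢
    by_cases hgx : g < x
    · have hle : (s.filter (fun y => g < y)).min' h ≤ x :=
        Finset.min'_le _ x (Finset.mem_filter.mpr ⟨hx, hgx⟩)
      unfold cyc3; omega
    · unfold cyc3; omega
  · have hv : nextVal g s = s.min' hs := by
      unfold nextVal; rw [dif_neg h, dif_pos hs]
    have hmem := s.min'_mem hs
    have hle := Finset.min'_le s x hx
    have hx2 : ¬ g < x := fun hc => h ⟨x, Finset.mem_filter.mpr ⟨hx, hc⟩⟩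
    have hmg : s.min' hs ≠ g := fun e => hg (e ▸ hmem)
    have hm2 : ¬ g < s.min' hs := fun hc => h ⟨_, Finset.mem_filter.mpr ⟨hmem, hc⟩⟩
    rw [hv] at hne ⊢
    unfold cyc3; omega

lemma nextVal_unique {g m : ℕ} {s : Finset ℕ} (hm : m ∈ s) (hg : g ∉ s)
    (h : ∀ x ∈ s, x ≠ m → cyc3 m x g) : m = nextVal g s := by
  by_contra hne
  exact cyc3_asymm (nextVal_spec hm hne hg)
    (h _ (nextVal_mem ⟨m, hm⟩) (fun e => hne e.symm))

noncomputable def remF (γ : ℕ → ℕ) (S : Finset ℕ) : ℕ → Finset ℕ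
  | 0 => S
  | c + 1 => (remF γ S c).erase (nextVal (γ (c + 1)) (remF γ S c))

noncomputable def pick (γ : ℕ → ℕ) (S : Finset ℕ) (c : ℕ) : ℕ :=
  nextVal (γ c) (remF γ S (c - 1))

lemma remF_subset_self (γ : ℕ → ℕ) (S : Finset ℕ) : ∀ c, remF γ S c ⊆ S := by
  intro c; induction c with
  | zero => exact Finset.Subset.refl _
  | succ c ih => exact (Finset.erase_subset _ _).trans ih

lemma remF_card (γ : ℕ → ℕ) (S : Finset ℕ) :
    ∀ c, c ≤ S.card → (remF γ S c).card = S.card - c := by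
  intro c; induction c with
  | zero => simp [remF]
  | succ c ih =>
    intro hc
    have hc' : c ≤ S.card := Nat.le_of_succ_le hc
    have hcard := ih hc'
    have hne : (remF γ S c).Nonempty := by
      rw [← Finset.card_pos, hcard]; omega
    show ((remF γ S c).erase _).card = _
    rw [Finset.card_erase_of_mem (nextVal_mem hne), hcard]; omega

lemma remF_mono (γ : ℕ → ℕ) (S : Finset ℕ) {c c' : ℕ} (h : c ≤ c') :
    remF γ S c' ⊆ remF γ S c := by
  induction c' with
  | zero => simp_all
  | succ d ih =>
    rcases Nat.eq_or_lt_of_le h with rfl | hlt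
    · exact Finset.Subset.refl _
    · exact ((Finset.erase_subset _ _).trans (ih (Nat.lt_succ_iff.mp hlt)))

lemma remF_succ_pos (γ : ℕ → ℕ) (S : Finset ℕ) {c : ℕ} (hc : 1 ≤ c) :
    remF γ S c = (remF γ S (c - 1)).erase (pick γ S c) := by
  obtain ⟨d, rfl⟩ := Nat.exists_eq_add_of_le hc
  simp [remF, pick, Nat.add_comm]

lemma pick_mem_rem (γ : ℕ → ℕ) (S : Finset ℕ) {c : ℕ} (h1 : 1 ≤ c) (h2 : c ≤ S.card) :
    pick γ S c ∈ remF γ S (c - 1) := by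
  apply nextVal_mem
  rw [← Finset.card_pos, remF_card γ S _ (by omega)]; omega

lemma pick_notMem_rem (γ : ℕ → ℕ) (S : Finset ℕ) {c : ℕ} (h1 : 1 ≤ c) :
    pick γ S c ∉ remF γ S c := by
  rw [remF_succ_pos γ S h1]; exact Finset.notMem_erase _ _

lemma pick_mem (γ : ℕ → ℕ) (S : Finset ℕ) {c : ℕ} (h1 : 1 ≤ c) (h2 : c ≤ S.card) :
    pick γ S c ∈ S :=
  remF_subset_self γ S _ (pick_mem_rem γ S h1 h2)

lemma pick_ne (γ : ℕ → ℕ) (S : Finset ℕ) {c c' : ℕ} (h1 : 1 ≤ c) (h2 : c < c')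
    (h3 : c' ≤ S.card) : pick γ S c ≠ pick γ S c' := by
  intro he
  have hmem : pick γ S c' ∈ remF γ S c :=
    remF_mono γ S (by omega) (pick_mem_rem γ S (by omega) h3)
  rw [← he] at hmem
  exact pick_notMem_rem γ S h1 hmem

lemma pick_cyc3 (γ : ℕ → ℕ) (S : Finset ℕ)
    (hγ : ∀ c, 1 ≤ c → c ≤ S.card → γ c ∉ S) {c c' : ℕ}
    (h1 : 1 ≤ c) (h2 : c < c') (h3 : c' ≤ S.card) :
    cyc3 (pick γ S c) (pick γ S c') (γ c) := by
  apply nextVal_spec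
  · exact remF_mono γ S (by omega) (pick_mem_rem γ S (by omega) h3)
  · exact (pick_ne γ S h1 h2 h3).symm
  · exact fun hm => hγ c h1 (by omega) (remF_subset_self γ S _ hm)

lemma pick_image (γ : ℕ → ℕ) (S : Finset ℕ) :
    (Finset.Icc 1 S.card).image (pick γ S) = S := by
  apply Finset.eq_of_subset_of_card_le
  · intro x hx
    obtain ⟨c, hc, rfl⟩ := Finset.mem_image.mp hx
    rw [Finset.mem_Icc] at hc
    exact pick_mem γ S hc.1 hc.2
  · rw [Finset.card_image_of_injOn, Nat.card_Icc]
    · omega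
    · intro c hc c' hc' he
      rw [Finset.mem_coe, Finset.mem_Icc] at hc hc'
      by_contra hne
      rcases Nat.lt_or_ge c c' with h | h
      · exact pick_ne γ S hc.1 h hc'.2 he
      · exact pick_ne γ S hc'.1 (by omega) hc.2 he.symm

lemma row_unique (γ : ℕ → ℕ) (S : Finset ℕ) (e : ℕ → ℕ)
    (hγ : ∀ c, 1 ≤ c → c ≤ S.card → γ c ∉ S)
    (he : ∀ c, 1 ≤ c → c ≤ S.card → e c ∈ S)
    (hinj : ∀ c c', 1 ≤ c → c ≤ S.card → 1 ≤ c' → c' ≤ S.card → c ≠ c' → e c ≠ e c')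
    (hcyc : ∀ c c', 1 ≤ c → c < c' → c' ≤ S.card → cyc3 (e c) (e c') (γ c)) :
    ∀ c, c ≤ S.card →
      remF γ S c = S \ (Finset.Icc 1 c).image e ∧
      (∀ c'', 1 ≤ c'' → c'' ≤ c → e c'' = pick γ S c'') := by
  have himg : (Finset.Icc 1 S.card).image e = S := by
    apply Finset.eq_of_subset_of_card_le
    · intro x hx
      obtain ⟨c, hc, rfl⟩ := Finset.mem_image.mp hx
      rw [Finset.mem_Icc] at hc
      exact he c hc.1 hc.2
    · rw [Finset.card_image_of_injOn, Nat.card_Icc]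
      · omega
      · intro c hc c' hc' hee
        rw [Finset.mem_coe, Finset.mem_Icc] at hc hc'
        by_contra hne
        exact hinj c c' hc.1 hc.2 hc'.1 hc'.2 hne hee
  intro c; induction c with
  | zero => exact fun _ => ⟨by simp [remF], fun c'' h1 h2 => by omega⟩
  | succ c ih =>
    intro hc
    have hc' : c ≤ S.card := Nat.le_of_succ_le hc
    obtain ⟨hrem, hpicks⟩ := ih hc'
    have hm : e (c + 1) ∈ remF γ S c := by
      rw [hrem, Finset.mem_sdiff]
      refine ⟨he _ (by omega) hc, fun hmem => ?_⟩
      obtain ⟨d, hd, hde⟩ := Finset.mem_image.mp hmem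
      rw [Finset.mem_Icc] at hd
      exact hinj (c+1) d (by omega) hc hd.1 (by omega) (by omega) hde.symm
    have hgn : γ (c + 1) ∉ remF γ S c :=
      fun hmem => hγ (c+1) (by omega) hc (remF_subset_self γ S _ hmem)
    have hkey : e (c + 1) = nextVal (γ (c + 1)) (remF γ S c) := by
      apply nextVal_unique hm hgn
      intro x hx hxne
      have hxS : x ∈ S := remF_subset_self γ S _ hx
      obtain ⟨d, hd, rfl⟩ := Finset.mem_image.mp (himg ▸ hxS)
      rw [Finset.mem_Icc] at hd
      have hdgt : c + 1 < d := by
        rcases Nat.lt_or_ge (c+1) d with h | h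
        · exact h
        · exfalso
          rcases Nat.eq_or_lt_of_le h with rfl | hlt
          · exact hxne rfl
          · rw [hrem, Finset.mem_sdiff] at hx
            exact hx.2 (Finset.mem_image.mpr ⟨d, Finset.mem_Icc.mpr ⟨hd.1, by omega⟩, rfl⟩)
      exact hcyc (c+1) d (by omega) hdgt hd.2
    have hpickc : e (c + 1) = pick γ S (c + 1) := by
      rw [hkey]; rfl
    constructor
    · show (remF γ S c).erase _ = _
      rw [← hkey, hrem]
      ext x
      simp only [Finset.mem_erase, Finset.mem_sdiff, Finset.mem_image, Finset.mem_Icc,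
        not_exists, not_and]
      constructor
      · rintro ⟨hxne, hxS, hnim⟩
        refine ⟨hxS, fun d hd hde => ?_⟩
        rcases Nat.eq_or_lt_of_le hd.2 with rfl | hlt
        · exact hxne hde.symm
        · exact hnim d ⟨hd.1, by omega⟩ hde
      · rintro ⟨hxS, hnim⟩
        exact ⟨fun hde => hnim (c+1) ⟨by omega, le_refl _⟩ hde.symm, hxS,
          fun d hd hde => hnim d ⟨hd.1, by omega⟩ hde⟩
    · intro c'' h1 h2
      rcases Nat.eq_or_lt_of_le h2 with rfl | hlt
      · exact hpickc
      · exact hpicks c'' h1 (by omega)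

noncomputable def rowFun (B : ℕ → Finset ℕ) : ℕ → ℕ → ℕ
  | 0 => fun _ => 0
  | r + 1 => pick (rowFun B r) (B (r + 1))

lemma rowFun_eq (B : ℕ → Finset ℕ) {r : ℕ} (hr : 1 ≤ r) :
    rowFun B r = pick (rowFun B (r - 1)) (B r) := by
  obtain ⟨d, rfl⟩ : ∃ d, r = d + 1 := ⟨r - 1, by omega⟩
  simp [rowFun]

lemma mem_keyDiagram_iff {ℓ : ℕ} {μ : ℕ → ℕ}
    (hμN : ∀ r, 1 ≤ r → r ≤ ℓ → μ r ≤ NN ℓ μ) {r c : ℕ} :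
    (r, c) ∈ keyDiagram ℓ μ ↔ 1 ≤ r ∧ r ≤ ℓ ∧ 1 ≤ c ∧ c ≤ μ r := by
  unfold keyDiagram
  simp only [Finset.mem_filter, Finset.mem_product, Finset.mem_Icc]
  constructor
  · rintro ⟨⟨⟨h1, h2⟩, ⟨h3, _⟩⟩, h5⟩
    exact ⟨h1, h2, h3, h5⟩
  · rintro ⟨h1, h2, h3, h5⟩
    exact ⟨⟨⟨h1, h2⟩, ⟨h3, h5.trans (hμN r h1 h2)⟩⟩, h5⟩

end NSMac

/-- given pairwise disjoint sets `B_1, …, B_ℓ` partitioning `{1, …, N}`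
with `|B_i| = μ_i`, there is exactly one standard Young tabloid of shape `μ` whose row
`i` has entry set `B_i`. -/
theorem NSMac.unique_syd_with_given_rows (ℓ : ℕ) (μ : ℕ → ℕ) (hμ : IsPartition ℓ μ)
    (B : ℕ → Finset ℕ)
    (hcard : ∀ i, 1 ≤ i → i ≤ ℓ → (B i).card = μ i)
    (hdisj : ∀ i j, 1 ≤ i → i ≤ ℓ → 1 ≤ j → j ≤ ℓ → i ≠ j → Disjoint (B i) (B j))
    (hunion : (Finset.Icc 1 ℓ).biUnion B = Finset.Icc 1 (NN ℓ μ)) :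
    ∃! T, T ∈ SYDset ℓ μ ∧ ∀ i, 1 ≤ i → i ≤ ℓ →
      ((keyDiagram ℓ μ).filter (fun c => c.1 = i)).image ⇑T = B i := by
    classical
  have hμN : ∀ r, 1 ≤ r → r ≤ ℓ → μ r ≤ NN ℓ μ := by
    intro r h1 h2
    exact Finset.single_le_sum (f := μ) (fun i _ => Nat.zero_le _)
      (Finset.mem_Icc.mpr ⟨h1, h2⟩)
  have hdiag : ∀ r c : ℕ, (r, c) ∈ keyDiagram ℓ μ ↔ 1 ≤ r ∧ r ≤ ℓ ∧ 1 ≤ c ∧ c ≤ μ r :=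
    fun r c => mem_keyDiagram_iff hμN
  have hBsub : ∀ r, 1 ≤ r → r ≤ ℓ → B r ⊆ Finset.Icc 1 (NN ℓ μ) := by
    intro r h1 h2 x hx
    rw [← hunion]
    exact Finset.mem_biUnion.mpr ⟨r, Finset.mem_Icc.mpr ⟨h1, h2⟩, hx⟩
  have hrmem : ∀ r, 1 ≤ r → r ≤ ℓ → ∀ c, 1 ≤ c → c ≤ μ r → rowFun B r c ∈ B r := by
    intro r h1 h2 c hc1 hc2
    rw [rowFun_eq B h1]
    exact pick_mem _ _ hc1 (by rw [hcard r h1 h2]; exact hc2)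
  have hγ : ∀ r, 1 ≤ r → r ≤ ℓ → ∀ c, 1 ≤ c → c ≤ μ r → rowFun B (r - 1) c ∉ B r := by
    intro r h1 h2 c hc1 hc2 hmem
    rcases Nat.eq_or_lt_of_le h1 with h | hr2
    · have h0 : rowFun B (r - 1) c = 0 := by rw [← h]; rfl
      rw [h0] at hmem
      have := hBsub r h1 h2 hmem
      rw [Finset.mem_Icc] at this
      omega
    · have hr1 : 1 ≤ r - 1 := by omega
      have hr1l : r - 1 ≤ ℓ := by omega
      have hmem' : rowFun B (r - 1) c ∈ B (r - 1) :=
        hrmem (r - 1) hr1 hr1l c hc1 (hc2.trans (hμ.2 (r - 1) r hr1 (by omega) h2))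
      exact (Finset.disjoint_left.mp (hdisj (r - 1) r hr1 hr1l h1 h2 (by omega)) hmem') hmem
  have himgB : ∀ r, 1 ≤ r → r ≤ ℓ → (Finset.Icc 1 (μ r)).image (rowFun B r) = B r := by
    intro r h1 h2
    have h := pick_image (rowFun B (r - 1)) (B r)
    rw [hcard r h1 h2] at h
    rw [rowFun_eq B h1]
    exact h
  set Tf : (ℕ × ℕ) →₀ ℕ :=
    Finsupp.indicator (keyDiagram ℓ μ) (fun c _ => rowFun B c.1 c.2) with hTfdef
  have hTfapp : ∀ c ∈ keyDiagram ℓ μ, Tf c = rowFun B c.1 c.2 := by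
    intro c hc
    exact Finsupp.indicator_of_mem hc _
  have hinjTf : ∀ p ∈ keyDiagram ℓ μ, ∀ q ∈ keyDiagram ℓ μ,
      rowFun B p.1 p.2 = rowFun B q.1 q.2 → p = q := by
    rintro ⟨p1, p2⟩ hp ⟨q1, q2⟩ hq he
    rw [hdiag] at hp hq
    have hpB : rowFun B p1 p2 ∈ B p1 := hrmem p1 hp.1 hp.2.1 p2 hp.2.2.1 hp.2.2.2
    have hqB : rowFun B q1 q2 ∈ B q1 := hrmem q1 hq.1 hq.2.1 q2 hq.2.2.1 hq.2.2.2
    have hrr : p1 = q1 := by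
      by_contra hne
      exact (Finset.disjoint_left.mp
        (hdisj p1 q1 hp.1 hp.2.1 hq.1 hq.2.1 hne) hpB) (he ▸ hqB)
    subst hrr
    have hcards : (B p1).card = μ p1 := hcard p1 hp.1 hp.2.1
    have hcc : p2 = q2 := by
      by_contra hne
      rw [rowFun_eq B hp.1] at he
      rcases Nat.lt_or_ge p2 q2 with h | h
      · exact pick_ne _ _ hp.2.2.1 h (by rw [hcards]; exact hq.2.2.2) he
      · exact pick_ne _ _ hq.2.2.1 (by omega) (by rw [hcards]; exact hp.2.2.2) he.symm
    rw [hcc]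
  have hTfFill : Tf ∈ Fillings ℓ μ (NN ℓ μ) := by
    rw [Fillings, Finset.mem_finsupp_iff]
    constructor
    · intro x hx
      by_contra h
      rw [Finsupp.mem_support_iff] at hx
      exact hx (Finsupp.indicator_of_notMem h _)
    · intro c hc
      rw [hTfapp c hc]
      obtain ⟨c1, c2⟩ := c
      rw [hdiag] at hc
      exact hBsub c1 hc.1 hc.2.1 (hrmem c1 hc.1 hc.2.1 c2 hc.2.2.1 hc.2.2.2)
  have hTfstd : IsStandardFilling ℓ μ ⇑Tf := by
    refine ⟨?_, ?_, ?_⟩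
    · intro c hc
      have hc2 : c ∈ keyDiagram ℓ μ := Finset.mem_coe.mp hc
      rw [Set.mem_Icc]
      rw [hTfapp c hc2]
      obtain ⟨c1, c2⟩ := c
      rw [hdiag] at hc2
      have h := hBsub c1 hc2.1 hc2.2.1 (hrmem c1 hc2.1 hc2.2.1 c2 hc2.2.2.1 hc2.2.2.2)
      rw [Finset.mem_Icc] at h
      exact h
    · intro p hp q hq he
      rw [Finset.mem_coe] at hp hq
      rw [hTfapp p hp, hTfapp q hq] at he
      exact hinjTf p hp q hq he
    · intro x hx
      rw [Set.mem_Icc] at hx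
      have hxmem : x ∈ (Finset.Icc 1 ℓ).biUnion B := by
        rw [hunion]; exact Finset.mem_Icc.mpr hx
      obtain ⟨r, hr, hxB⟩ := Finset.mem_biUnion.mp hxmem
      rw [Finset.mem_Icc] at hr
      rw [← himgB r hr.1 hr.2] at hxB
      obtain ⟨c, hcmem, hce⟩ := Finset.mem_image.mp hxB
      rw [Finset.mem_Icc] at hcmem
      have hcd : (r, c) ∈ keyDiagram ℓ μ := (hdiag r c).mpr ⟨hr.1, hr.2, hcmem.1, hcmem.2⟩
      exact ⟨(r, c), Finset.mem_coe.mpr hcd, by rw [hTfapp _ hcd]; exact hce⟩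
  have hinv : invY ℓ μ ⇑Tf = 0 := by
    unfold invY
    rw [Finset.card_eq_zero, Finset.filter_eq_empty_iff]
    rintro ⟨⟨r, c⟩, ⟨r', c'⟩⟩ hp hIP
    rw [Finset.mem_product] at hp
    obtain ⟨hp1d, hp2d⟩ := hp
    unfold IsInvPair at hIP
    obtain ⟨h1, h2, h3⟩ := hIP
    dsimp only at h1 h2 h3
    subst h1
    have hb1 := (hdiag r c).mp hp1d
    have hb2 := (hdiag r c').mp hp2d
    have hcards : (B r).card = μ r := hcard r hb1.1 hb1.2.1
    have hcyc : cyc3 (rowFun B r c) (rowFun B r c') (rowFun B (r - 1) c) := by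
      rw [rowFun_eq B hb1.1]
      apply pick_cyc3
      · intro d hd1 hd2
        exact hγ r hb1.1 hb1.2.1 d hd1 (by omega)
      · exact hb1.2.2.1
      · exact h2
      · omega
    by_cases hr : r = 1
    · subst hr
      rw [if_pos rfl] at h3
      rw [hTfapp _ hp1d, hTfapp _ hp2d] at h3
      dsimp only at h3
      have h0 : rowFun B (1 - 1) c = 0 := rfl
      rw [h0] at hcyc
      unfold cyc3 at hcyc
      omega
    · rw [if_neg hr] at h3
      have hd3 : (r - 1, c) ∈ keyDiagram ℓ μ := (hdiag _ _).mpr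
        ⟨by omega, by omega, hb1.2.2.1,
         hb1.2.2.2.trans (hμ.2 (r - 1) r (by omega) (by omega) hb1.2.1)⟩
      rw [hTfapp _ hp1d, hTfapp _ hp2d, hTfapp _ hd3] at h3
      dsimp only at h3
      exact cyc3_asymm hcyc h3
  have hrows : ∀ i, 1 ≤ i → i ≤ ℓ →
      ((keyDiagram ℓ μ).filter (fun c => c.1 = i)).image ⇑Tf = B i := by
    intro i h1 h2
    apply Finset.Subset.antisymm
    · intro x hx
      obtain ⟨c, hcmem, rfl⟩ := Finset.mem_image.mp hx
      rw [Finset.mem_filter] at hcmem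
      obtain ⟨hcd, hci⟩ := hcmem
      rw [hTfapp c hcd]
      obtain ⟨c1, c2⟩ := c
      dsimp only at hci
      subst hci
      rw [hdiag] at hcd
      exact hrmem c1 h1 h2 c2 hcd.2.2.1 hcd.2.2.2
    · intro x hx
      rw [← himgB i h1 h2] at hx
      obtain ⟨c, hcmem, hce⟩ := Finset.mem_image.mp hx
      rw [Finset.mem_Icc] at hcmem
      have hcd : (i, c) ∈ keyDiagram ℓ μ := (hdiag i c).mpr ⟨h1, h2, hcmem.1, hcmem.2⟩
      exact Finset.mem_image.mpr ⟨(i, c), Finset.mem_filter.mpr ⟨hcd, rfl⟩,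
        by rw [hTfapp _ hcd]; exact hce⟩
  refine ⟨Tf, ⟨?_, hrows⟩, ?_⟩
  · rw [SYDset, Finset.mem_filter]
    exact ⟨hTfFill, hTfstd, hinv⟩
  · rintro T' ⟨hT'mem, hT'rows⟩
    rw [SYDset, Finset.mem_filter] at hT'mem
    obtain ⟨hT'fill, hT'std, hT'inv⟩ := hT'mem
    rw [Fillings, Finset.mem_finsupp_iff] at hT'fill
    have hT'val : ∀ r c, (r, c) ∈ keyDiagram ℓ μ → T' (r, c) ∈ B r := by
      intro r c hc
      have hb := (hdiag r c).mp hc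
      rw [← hT'rows r hb.1 hb.2.1]
      exact Finset.mem_image.mpr ⟨(r, c), Finset.mem_filter.mpr ⟨hc, rfl⟩, rfl⟩
    have hnoinv : ∀ p ∈ (keyDiagram ℓ μ) ×ˢ (keyDiagram ℓ μ), ¬ IsInvPair ℓ μ ⇑T' p := by
      intro p hp hIP
      have hmem : p ∈ Finset.filter (fun p => IsInvPair ℓ μ ⇑T' p)
          ((keyDiagram ℓ μ) ×ˢ (keyDiagram ℓ μ)) := Finset.mem_filter.mpr ⟨hp, hIP⟩
      unfold invY at hT'inv
      rw [Finset.card_eq_zero] at hT'inv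
      rw [hT'inv] at hmem
      exact absurd hmem (Finset.notMem_empty p)
    have hmain : ∀ r c, (r, c) ∈ keyDiagram ℓ μ → T' (r, c) = rowFun B r c := by
      intro r
      induction r with
      | zero =>
        intro c hc
        rw [hdiag] at hc
        omega
      | succ r ih =>
        intro c hc
        have hb := (hdiag (r + 1) c).mp hc
        have hcards : (B (r + 1)).card = μ (r + 1) := hcard (r + 1) hb.1 hb.2.1
        have hcyc' : ∀ c1 c2, 1 ≤ c1 → c1 < c2 → c2 ≤ (B (r + 1)).card →
            cyc3 (T' (r + 1, c1)) (T' (r + 1, c2)) (rowFun B r c1) := by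
          intro c1 c2 hc1 hc12 hc2
          have hcd1 : (r + 1, c1) ∈ keyDiagram ℓ μ :=
            (hdiag _ _).mpr ⟨by omega, hb.2.1, hc1, by omega⟩
          have hcd2 : (r + 1, c2) ∈ keyDiagram ℓ μ :=
            (hdiag _ _).mpr ⟨by omega, hb.2.1, by omega, by omega⟩
          have hne12 : T' (r + 1, c1) ≠ T' (r + 1, c2) := by
            intro he
            have := hT'std.2.1 (Finset.mem_coe.mpr hcd1) (Finset.mem_coe.mpr hcd2) he
            simp only [Prod.mk.injEq] at this
            omega
          have hnIP := hnoinv ((r + 1, c1), (r + 1, c2))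
            (Finset.mem_product.mpr ⟨hcd1, hcd2⟩)
          unfold IsInvPair at hnIP
          dsimp only at hnIP
          have h3' : ¬ _ := fun h => hnIP ⟨rfl, hc12, h⟩
          by_cases hr0 : r = 0
          · subst hr0
            rw [if_pos rfl] at h3'
            have hpos : 1 ≤ T' (0 + 1, c1) := by
              have hmem2 := hBsub (0 + 1) hb.1 hb.2.1 (hT'val (0 + 1) c1 hcd1)
              rw [Finset.mem_Icc] at hmem2
              exact hmem2.1
            have h0 : rowFun B 0 c1 = 0 := rfl
            rw [h0]
            unfold cyc3
            omega
          · rw [if_neg (by omega : ¬ (r + 1 = 1))] at h3'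
            have hcd0 : (r, c1) ∈ keyDiagram ℓ μ := (hdiag _ _).mpr
              ⟨by omega, by omega, hc1,
               le_trans (by omega) (hμ.2 r (r + 1) (by omega) (by omega) hb.2.1)⟩
            have hT'rc : T' ((r + 1) - 1, c1) = rowFun B r c1 := ih c1 hcd0
            rw [hT'rc] at h3'
            have hne1g : T' (r + 1, c1) ≠ rowFun B r c1 := by
              rw [← hT'rc]
              intro he
              have := hT'std.2.1 (Finset.mem_coe.mpr hcd1) (Finset.mem_coe.mpr hcd0) he
              simp only [Prod.mk.injEq] at this
              omega
            have hne2g : T' (r + 1, c2) ≠ rowFun B r c1 := by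
              rw [← hT'rc]
              intro he
              have := hT'std.2.1 (Finset.mem_coe.mpr hcd2) (Finset.mem_coe.mpr hcd0) he
              simp only [Prod.mk.injEq] at this
              omega
            exact cyc3_of_not hne12 hne1g hne2g h3'
        have hkey := (row_unique (rowFun B r) (B (r + 1)) (fun c => T' (r + 1, c))
          (fun d hd1 hd2 => hγ (r + 1) hb.1 hb.2.1 d hd1 (by omega))
          (fun d hd1 hd2 => hT'val (r + 1) d
            ((hdiag _ _).mpr ⟨by omega, hb.2.1, hd1, by omega⟩))
          (fun c1 c2 h1 h2 h3 h4 hne he => by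
            have hcd1 : (r + 1, c1) ∈ keyDiagram ℓ μ :=
              (hdiag _ _).mpr ⟨by omega, hb.2.1, h1, by omega⟩
            have hcd2 : (r + 1, c2) ∈ keyDiagram ℓ μ :=
              (hdiag _ _).mpr ⟨by omega, hb.2.1, h3, by omega⟩
            have := hT'std.2.1 (Finset.mem_coe.mpr hcd1) (Finset.mem_coe.mpr hcd2) he
            simp only [Prod.mk.injEq] at this
            omega)
          hcyc' (B (r + 1)).card le_rfl).2 c hb.2.2.1 (by omega)
        rw [rowFun_eq B (by omega : 1 ≤ r + 1)]
        exact hkey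
    apply Finsupp.ext
    rintro ⟨r, c⟩
    by_cases hp : (r, c) ∈ keyDiagram ℓ μ
    · rw [hTfapp _ hp]
      exact hmain r c hp
    · have h1 : T' (r, c) = 0 := by
        by_contra h
        exact hp (hT'fill.1 (Finsupp.mem_support_iff.mpr h))
      rw [h1, hTfdef]
      exact (Finsupp.indicator_of_notMem hp _).symm
end
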